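/- arXiv:2503.05885 — 7 statements merged into one kernel-verified Lean document; each statement's English description precedes it below -/
import Mathlib

section
/- Let d ≥ 1 and r > 0. Let v : ℤ^d → ℂ^d be divergence-free and real with Σ_k |v(k)| < ∞, and let a : ℤ^d → ℂ satisfy Σ_k (1+|k|)|a(k)| < ∞. Then the double sum Σ_{|k|≥r} Σ_{|j|≥r} k·( a(k) · conj(v(k−j)) · conj(a(j)) − conj(a(k)) · v(k−j) · a(j) ), taken over k, j ∈ ℤ^d with |k| ≥ r and |j| ≥ r, converges absolutely and equals 0. -/
open MeasureTheory ENNReal Real Set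
open scoped Classical

noncomputable section

/-- Euclidean norm of a lattice point `k ∈ ℤ^d`. -/
def znorm {d : ℕ} (k : Fin d → ℤ) : ℝ := Real.sqrt (∑ i, ((k i : ℝ)) ^ 2)

/-- Euclidean norm of a vector in `ℂ^d`. -/
def cnorm {d : ℕ} (z : Fin d → ℂ) : ℝ := Real.sqrt (∑ i, ‖z i‖ ^ 2)

/-- Pairing `k · z = Σ_i k_i z_i`. -/
def zdot {d : ℕ} (k : Fin d → ℤ) (z : Fin d → ℂ) : ℂ := ∑ i, (k i : ℂ) * z i

/-- Divergence-free in Fourier variables: `k · v(k) = 0` for all `k`. -/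
def DivFree {d : ℕ} (v : (Fin d → ℤ) → Fin d → ℂ) : Prop := ∀ k, zdot k (v k) = 0

/-- Fourier coefficients of a real vector field: `v(-k) = conj (v k)`. -/
def RealCoeff {d : ℕ} (v : (Fin d → ℤ) → Fin d → ℂ) : Prop :=
  ∀ k i, v (-k) i = starRingEnd ℂ (v k i)

/-- A weight: nondecreasing on `[0,∞)` with values in `[1,∞]`. -/
def IsWeight (w : ℝ → ℝ≥0∞) : Prop :=
  MonotoneOn w (Set.Ici 0) ∧ ∀ s, 0 ≤ s → 1 ≤ w s

/-- Weighted ℓ¹ norm `‖w v‖_{ℓ¹} = Σ_k w(|k|)|v(k)|`. -/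
def wl1 {d : ℕ} (w : ℝ → ℝ≥0∞) (v : (Fin d → ℤ) → Fin d → ℂ) : ℝ≥0∞ :=
  ∑' k, w (znorm k) * ENNReal.ofReal (cnorm (v k))

/-- `(w⁻¹ * m_a)(r) = Σ_k w(||k|-r|)⁻¹ |a(k)|²`. -/
def convMass {d : ℕ} (w : ℝ → ℝ≥0∞) (a : (Fin d → ℤ) → ℂ) (r : ℝ) : ℝ≥0∞ :=
  ∑' k, (w |znorm k - r|)⁻¹ * (‖a k‖₊ : ℝ≥0∞) ^ 2

/-- `m_a(E) = Σ_{|k| ∈ E} |a(k)|²`. -/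
def massOn {d : ℕ} (a : (Fin d → ℤ) → ℂ) (E : Set ℝ) : ℝ≥0∞ :=
  ∑' k, if znorm k ∈ E then (‖a k‖₊ : ℝ≥0∞) ^ 2 else 0

/-- Logarithmic density measure `μ_{a,b}(E)`. -/
def logDensity (a b : ℝ) (E : Set ℝ) : ℝ≥0∞ :=
  (ENNReal.ofReal (Real.log (b / a)))⁻¹ * ∫⁻ r in E ∩ Set.Icc a b, ENNReal.ofReal r⁻¹

/-- The right-hand side of the Fourier advection–diffusion system. -/
def fourierRHS {d : ℕ} (ν : ℝ) (v : (Fin d → ℤ) → Fin d → ℂ) (a : (Fin d → ℤ) → ℂ)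
    (k : Fin d → ℤ) : ℂ :=
  Complex.ofReal (-(4 * π ^ 2 * ν * znorm k ^ 2)) * a k
    - 2 * Complex.ofReal π * Complex.I * ∑' j, zdot k (v (k - j)) * a j


lemma znorm_nonneg {d : ℕ} (k : Fin d → ℤ) : 0 ≤ znorm k := Real.sqrt_nonneg _
lemma cnorm_nonneg {d : ℕ} (z : Fin d → ℂ) : 0 ≤ cnorm z := Real.sqrt_nonneg _

lemma abs_le_znorm {d : ℕ} (k : Fin d → ℤ) (i : Fin d) : |(k i : ℝ)| ≤ znorm k := by
  rw [← Real.sqrt_sq_eq_abs]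
  exact Real.sqrt_le_sqrt (Finset.single_le_sum (fun j _ => sq_nonneg ((k j : ℝ))) (Finset.mem_univ i))

lemma norm_le_cnorm {d : ℕ} (z : Fin d → ℂ) (i : Fin d) : ‖z i‖ ≤ cnorm z := by
  have : ‖z i‖ = Real.sqrt (‖z i‖ ^ 2) := (Real.sqrt_sq (norm_nonneg _)).symm
  rw [this]
  exact Real.sqrt_le_sqrt (Finset.single_le_sum (fun j _ => sq_nonneg ‖z j‖) (Finset.mem_univ i))

/-- The flux term. -/
def fluxF {d : ℕ} (v : (Fin d → ℤ) → Fin d → ℂ) (a : (Fin d → ℤ) → ℂ)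
    (p : (Fin d → ℤ) × (Fin d → ℤ)) : ℂ :=
  ∑ i, (p.1 i : ℂ) *
    (a p.1 * starRingEnd ℂ (v (p.1 - p.2) i) * starRingEnd ℂ (a p.2)
      - starRingEnd ℂ (a p.1) * v (p.1 - p.2) i * a p.2)

lemma fluxF_antisymm {d : ℕ} {v : (Fin d → ℤ) → Fin d → ℂ} (hdiv : DivFree v)
    (hreal : RealCoeff v) (a : (Fin d → ℤ) → ℂ) (k j : Fin d → ℤ) :
    fluxF v a (j, k) = - fluxF v a (k, j) := by
  have hw : ∀ i, v (j - k) i = starRingEnd ℂ (v (k - j) i) := fun i => by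
    have := hreal (k - j) i; rwa [neg_sub] at this
  have hz : (∑ i, ((k - j) i : ℂ) * v (k - j) i) = 0 := hdiv (k - j)
  have hz' : (∑ i, ((k - j) i : ℂ) * starRingEnd ℂ (v (k - j) i)) = 0 := by
    have := congrArg (starRingEnd ℂ) hz
    simpa [map_sum] using this
  have key : fluxF v a (k, j) + fluxF v a (j, k)
      = a k * starRingEnd ℂ (a j) * (∑ i, ((k - j) i : ℂ) * starRingEnd ℂ (v (k - j) i))
        - starRingEnd ℂ (a k) * a j * (∑ i, ((k - j) i : ℂ) * v (k - j) i) := by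
    unfold fluxF
    simp only [hw, Complex.conj_conj]
    rw [Finset.mul_sum, Finset.mul_sum, ← Finset.sum_sub_distrib, ← Finset.sum_add_distrib]
    refine Finset.sum_congr rfl fun i _ => ?_
    simp only [Pi.sub_apply, Int.cast_sub]
    ring
  rw [hz, hz'] at key
  simp only [mul_zero, sub_zero] at key
  linear_combination key

lemma fluxF_bound {d : ℕ} (v : (Fin d → ℤ) → Fin d → ℂ) (a : (Fin d → ℤ) → ℂ)
    (B : ℝ) (hB : ∀ j, ‖a j‖ ≤ B) (p : (Fin d → ℤ) × (Fin d → ℤ)) :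
    ‖fluxF v a p‖ ≤ (2 * d * B) * ((1 + znorm p.1) * ‖a p.1‖ * cnorm (v (p.1 - p.2))) := by
  obtain ⟨k, j⟩ := p
  have hB0 : 0 ≤ B := le_trans (norm_nonneg _) (hB j)
  calc ‖fluxF v a (k, j)‖ ≤ ∑ i : Fin d, ‖(k i : ℂ) *
        (a k * starRingEnd ℂ (v (k - j) i) * starRingEnd ℂ (a j)
          - starRingEnd ℂ (a k) * v (k - j) i * a j)‖ := norm_sum_le _ _
    _ ≤ ∑ _i : Fin d, (1 + znorm k) * (2 * (‖a k‖ * cnorm (v (k - j)) * B)) := by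
        refine Finset.sum_le_sum fun i _ => ?_
        rw [norm_mul]
        have h1 : ‖((k i : ℤ) : ℂ)‖ ≤ 1 + znorm k := by
          rw [Complex.norm_intCast]
          calc ‖(k i : ℤ)‖ = |(k i : ℝ)| := by simp [Int.norm_eq_abs]
            _ ≤ znorm k := abs_le_znorm k i
            _ ≤ 1 + znorm k := by linarith
        have h2 : ‖a k * starRingEnd ℂ (v (k - j) i) * starRingEnd ℂ (a j)
            - starRingEnd ℂ (a k) * v (k - j) i * a j‖ ≤ 2 * (‖a k‖ * cnorm (v (k - j)) * B) := by
          refine le_trans (norm_sub_le _ _) ?_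
          have e1 : ‖a k * starRingEnd ℂ (v (k - j) i) * starRingEnd ℂ (a j)‖
              ≤ ‖a k‖ * cnorm (v (k - j)) * B := by
            rw [norm_mul, norm_mul, RCLike.norm_conj, RCLike.norm_conj]
            exact mul_le_mul (mul_le_mul_of_nonneg_left (norm_le_cnorm _ i) (norm_nonneg _))
              (hB j) (norm_nonneg _) (mul_nonneg (norm_nonneg _) (cnorm_nonneg _))
          have e2 : ‖starRingEnd ℂ (a k) * v (k - j) i * a j‖
              ≤ ‖a k‖ * cnorm (v (k - j)) * B := by
            rw [norm_mul, norm_mul, RCLike.norm_conj]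
            exact mul_le_mul (mul_le_mul_of_nonneg_left (norm_le_cnorm _ i) (norm_nonneg _))
              (hB j) (norm_nonneg _) (mul_nonneg (norm_nonneg _) (cnorm_nonneg _))
          linarith
        exact mul_le_mul h1 h2 (norm_nonneg _) (by linarith [znorm_nonneg k])
    _ = (2 * d * B) * ((1 + znorm k) * ‖a k‖ * cnorm (v (k - j))) := by
        rw [Finset.sum_const, Finset.card_univ, Fintype.card_fin, nsmul_eq_mul]
        ring

set_option maxHeartbeats 1000000 in
lemma fluxF_summable {d : ℕ} {v : (Fin d → ℤ) → Fin d → ℂ}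
    (hv : Summable fun k => cnorm (v k))
    {a : (Fin d → ℤ) → ℂ} (ha : Summable fun k => (1 + znorm k) * ‖a k‖) :
    Summable fun p : (Fin d → ℤ) × (Fin d → ℤ) => ‖fluxF v a p‖ := by
  set B := ∑' j, (1 + znorm j) * ‖a j‖ with hBdef
  have hnn : ∀ j : Fin d → ℤ, 0 ≤ (1 + znorm j) * ‖a j‖ := fun j =>
    mul_nonneg (by linarith [znorm_nonneg j]) (norm_nonneg _)
  have hB : ∀ j, ‖a j‖ ≤ B := fun j =>
    le_trans (le_mul_of_one_le_left (norm_nonneg _) (by linarith [znorm_nonneg j]))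
      (Summable.le_tsum ha j fun _ _ => hnn _)
  have h0 : Summable fun p : (Fin d → ℤ) × (Fin d → ℤ) =>
      ((1 + znorm p.1) * ‖a p.1‖) * cnorm (v p.2) :=
    Summable.mul_of_nonneg (f := fun k : Fin d → ℤ => (1 + znorm k) * ‖a k‖)
      (g := fun k : Fin d → ℤ => cnorm (v k)) ha hv hnn fun k => cnorm_nonneg _
  have hinv : Function.Involutive
      (fun p : (Fin d → ℤ) × (Fin d → ℤ) => (p.1, p.1 - p.2)) := fun p => by
    simp
  have h1 : Summable fun p : (Fin d → ℤ) × (Fin d → ℤ) =>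
      ((1 + znorm p.1) * ‖a p.1‖) * cnorm (v (p.1 - p.2)) := by
    have := (Equiv.summable_iff (hinv.toPerm _)).2 h0
    simpa [Function.comp_def, Function.Involutive.coe_toPerm] using this
  refine Summable.of_nonneg_of_le (fun p => norm_nonneg _) ?_ (h1.mul_left (2 * d * B))
  intro p
  have := fluxF_bound v a B hB p
  calc ‖fluxF v a p‖ ≤ (2 * d * B) * ((1 + znorm p.1) * ‖a p.1‖ * cnorm (v (p.1 - p.2))) := this
    _ = (2 * d * B) * ((1 + znorm p.1) * ‖a p.1‖ * cnorm (v (p.1 - p.2))) := rfl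

/-- the antisymmetrized advective flux between frequencies of modulus `≥ r`
converges absolutely and vanishes. -/
theorem flux_antisymmetry_vanishes {d : ℕ} (hd : 1 ≤ d) (r : ℝ) (hr : 0 < r)
    (v : (Fin d → ℤ) → Fin d → ℂ) (hdiv : DivFree v) (hreal : RealCoeff v)
    (hv : Summable fun k => cnorm (v k))
    (a : (Fin d → ℤ) → ℂ) (ha : Summable fun k => (1 + znorm k) * ‖a k‖) :
    (Summable fun p : {p : (Fin d → ℤ) × (Fin d → ℤ) // r ≤ znorm p.1 ∧ r ≤ znorm p.2} =>
      ‖∑ i, (p.1.1 i : ℂ) *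
        (a p.1.1 * starRingEnd ℂ (v (p.1.1 - p.1.2) i) * starRingEnd ℂ (a p.1.2)
          - starRingEnd ℂ (a p.1.1) * v (p.1.1 - p.1.2) i * a p.1.2)‖) ∧
    (∑' p : {p : (Fin d → ℤ) × (Fin d → ℤ) // r ≤ znorm p.1 ∧ r ≤ znorm p.2},
      ∑ i, (p.1.1 i : ℂ) *
        (a p.1.1 * starRingEnd ℂ (v (p.1.1 - p.1.2) i) * starRingEnd ℂ (a p.1.2)
          - starRingEnd ℂ (a p.1.1) * v (p.1.1 - p.1.2) i * a p.1.2)) = 0 := by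
  set S := {p : (Fin d → ℤ) × (Fin d → ℤ) // r ≤ znorm p.1 ∧ r ≤ znorm p.2}
  have hsum : Summable fun p : S => ‖fluxF v a p.1‖ :=
    (fluxF_summable hv ha).comp_injective Subtype.val_injective
  constructor
  · exact hsum
  · have hinv : Function.Involutive (fun p : S => (⟨(p.1.2, p.1.1), p.2.2, p.2.1⟩ : S)) :=
      fun p => rfl
    set σ : S ≃ S := hinv.toPerm _ with hσdef
    have hkey : ∀ p : S, fluxF v a (σ p).1 = - fluxF v a p.1 := fun p =>
      fluxF_antisymm hdiv hreal a p.1.1 p.1.2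
    have h1 : (∑' p : S, fluxF v a (σ p).1) = ∑' p : S, fluxF v a p.1 :=
      σ.tsum_eq fun p => fluxF v a p.1
    rw [tsum_congr hkey, tsum_neg] at h1
    have h2 : (∑' p : S, fluxF v a p.1) = 0 := by
      linear_combination (-1/2 : ℂ) * h1
    exact h2
end
end

section
/- There exists a constant C ≥ 2, depending only on K and γ, such that the following holds. Assume the probabilistic Fourier setup with diffusivity ν ∈ (0, e^{−1}]. Let w be a weight, let W : Ω × [0,∞) → [0,∞] be jointly measurable, and let r satisfy 2 ≤ r ≤ ν^{−1/2} / (C (log ν^{−1})^{1/2}). Suppose additionally that almost surely Σ_{|k|≥r} |a_0(k)|² ≤ 1/4, and that almost surely for every T > 0 the flux inequality holds: Σ_{|k|≥r} |a_T(k)|² − Σ_{|k|≥r} |a_0(k)|² + 8π²ν ∫_0^T Σ_{|k|≥r} |k|² |a_t(k)|² dt ≤ 4πr ∫_0^T W_t · (w^{−1} * m_{a_t})(r) dt. Then for every T ≥ C log r: 𝔼 ∫_0^T W_t · (w^{−1} * m_{a_t})(r) dt ≥ 1/(C r). -/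
open MeasureTheory ENNReal Real Set
open scoped Classical

noncomputable section

/-- The probabilistic Fourier setup: joint measurability, `a_t(0)=0`, unit initial mass,
the a.s. energy identity, and the uniform-in-diffusivity exponential mixing bound. -/
def ProbSetup {d : ℕ} {Ω : Type*} [MeasurableSpace Ω] (ℙ : Measure Ω) (ν K γ : ℝ)
    (a : Ω → ℝ → (Fin d → ℤ) → ℂ) : Prop :=
  (∀ k : Fin d → ℤ, Measurable fun p : Ω × ℝ => a p.1 p.2 k) ∧
  (∀ᵐ ω ∂ℙ,
    (∀ t : ℝ, a ω t 0 = 0) ∧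
    (∑' k : Fin d → ℤ, (‖a ω 0 k‖₊ : ℝ≥0∞) ^ 2) = 1 ∧
    (∀ T > (0 : ℝ),
      (∑' k : Fin d → ℤ, (‖a ω T k‖₊ : ℝ≥0∞) ^ 2)
        + ENNReal.ofReal (8 * π ^ 2 * ν) *
          (∫⁻ t in Set.Ioc (0 : ℝ) T,
            ∑' k : Fin d → ℤ, ENNReal.ofReal (znorm k ^ 2) * (‖a ω t k‖₊ : ℝ≥0∞) ^ 2)
        = 1)) ∧
  (∀ t : ℝ, 0 ≤ t →
    (∫⁻ ω, (∑' k : Fin d → ℤ, if k = 0 then 0 else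
        (ENNReal.ofReal ((2 * π * znorm k) ^ 2))⁻¹ * (‖a ω t k‖₊ : ℝ≥0∞) ^ 2) ∂ℙ)
      ≤ ENNReal.ofReal (K * Real.exp (-γ * t)))

lemma one_le_znorm {d : ℕ} {k : Fin d → ℤ} (hk : k ≠ 0) : 1 ≤ znorm k := by
  obtain ⟨i, hi⟩ : ∃ i, k i ≠ 0 := by
    by_contra h; push_neg at h; exact hk (funext h)
  have h1 : (1:ℝ) ≤ ((k i : ℝ))^2 := by
    have : (1:ℤ) ≤ (k i)^2 := by
      rcases lt_or_gt_of_ne hi with h | h <;> nlinarith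
    exact_mod_cast this
  have h2 : (1:ℝ) ≤ ∑ j, ((k j : ℝ))^2 :=
    h1.trans (Finset.single_le_sum (fun j _ => sq_nonneg ((k j : ℝ))) (Finset.mem_univ i))
  calc (1:ℝ) = Real.sqrt 1 := Real.sqrt_one.symm
  _ ≤ znorm k := Real.sqrt_le_sqrt h2

lemma tsum_ite_split {ι : Type*} (p : ι → Prop) (f : ι → ℝ≥0∞) :
    ∑' i, f i = (∑' i, if p i then f i else 0) + ∑' i, if p i then 0 else f i := by
  rw [← ENNReal.tsum_add]; exact tsum_congr fun i => by split_ifs <;> simp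

set_option maxHeartbeats 1000000 in
/-- under the a.s. flux inequality with flux magnitude `W`, the expected
time-integrated flux through the sphere of radius `r` is at least `1/(Cr)`. -/
theorem expected_flux_lower_bound (K γ : ℝ) (hK : 1 ≤ K) (hγ : 0 < γ) :
    ∃ C : ℝ, 2 ≤ C ∧
      ∀ (d : ℕ), 1 ≤ d →
      ∀ (ν : ℝ), 0 < ν → ν ≤ Real.exp (-1) →
      ∀ (Ω : Type) [MeasurableSpace Ω] (ℙ : Measure Ω) [IsProbabilityMeasure ℙ]
        (a : Ω → ℝ → (Fin d → ℤ) → ℂ),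
      ProbSetup ℙ ν K γ a →
      ∀ (w : ℝ → ℝ≥0∞), IsWeight w →
      ∀ (W : Ω → ℝ → ℝ≥0∞), Measurable (fun p : Ω × ℝ => W p.1 p.2) →
      ∀ r : ℝ, 2 ≤ r → r ≤ ν ^ (-(1 / 2) : ℝ) / (C * Real.sqrt (Real.log ν⁻¹)) →
      (∀ᵐ ω ∂ℙ, massOn (a ω 0) (Set.Ici r) ≤ ENNReal.ofReal (1 / 4)) →
      (∀ᵐ ω ∂ℙ, ∀ T > (0 : ℝ),
        massOn (a ω T) (Set.Ici r)
          + ENNReal.ofReal (8 * π ^ 2 * ν) *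
            (∫⁻ t in Set.Ioc (0 : ℝ) T, ∑' k : Fin d → ℤ, if r ≤ znorm k then
              ENNReal.ofReal (znorm k ^ 2) * (‖a ω t k‖₊ : ℝ≥0∞) ^ 2 else 0)
          ≤ massOn (a ω 0) (Set.Ici r)
            + ENNReal.ofReal (4 * π * r) *
              ∫⁻ t in Set.Ioc (0 : ℝ) T, W ω t * convMass w (a ω t) r) →
      ∀ T : ℝ, C * Real.log r ≤ T →
        ENNReal.ofReal (1 / (C * r)) ≤
          ∫⁻ ω, (∫⁻ t in Set.Ioc (0 : ℝ) T, W ω t * convMass w (a ω t) r) ∂ℙ := by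
  have hπ : 0 < π := Real.pi_pos
  have hπ3 : 3 < π := Real.pi_gt_three
  have hK0 : (0:ℝ) < K := lt_of_lt_of_le one_pos hK
  have hlog2 : 0 < Real.log 2 := Real.log_pos one_lt_two
  have h32 : (1:ℝ) < 32*π^2*K := by nlinarith
  have hlog32 : 0 < Real.log (32*π^2*K) := Real.log_pos h32
  obtain ⟨C, hCdef⟩ : ∃ C : ℝ, C = 32*π^2 + (2 + Real.log (32*π^2*K)/Real.log 2)/γ := ⟨_, rfl⟩
  have hterm : 0 < (2 + Real.log (32*π^2*K)/Real.log 2)/γ := by positivity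
  have hCπ : 32*π^2 ≤ C := by rw [hCdef]; exact le_add_of_nonneg_right hterm.le
  have hC2 : (2:ℝ) ≤ C := by nlinarith
  have hC0 : (0:ℝ) < C := by linarith
  have hγC : 2 + Real.log (32*π^2*K)/Real.log 2 ≤ γ*C := by
    rw [hCdef, mul_add, mul_div_cancel₀ _ hγ.ne']
    nlinarith
  have hγC2 : (2:ℝ) ≤ γ*C := by
    have : 0 ≤ Real.log (32*π^2*K)/Real.log 2 := by positivity
    linarith
  refine ⟨C, hC2, ?_⟩
  intro d hd ν hν hνe Ω _ ℙ _ a hsetup w hw W hW r hr2 hrν hmass hflux T hT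
  obtain ⟨hameas, has, hmix⟩ := hsetup
  have hr0 : (0:ℝ) < r := by linarith
  have hlogr : 0 < Real.log r := Real.log_pos (by linarith)
  set T₀ := C * Real.log r with hT₀def
  have hT₀pos : 0 < T₀ := mul_pos hC0 hlogr
  -- Real-number estimates
  have hR1 : 4*π^2*r^2*(K*Real.exp (-γ*T₀)) ≤ 1/8 := by
    have he : Real.exp (-γ*T₀) = r ^ (-(γ*C)) := by
      rw [Real.rpow_def_of_pos hr0, hT₀def]; congr 1; ring
    have hcomb : r^2 * r ^ (-(γ*C)) = r ^ (2 - γ*C) := by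
      rw [← Real.rpow_natCast r 2, ← Real.rpow_add hr0]; norm_num [sub_eq_add_neg]
    have hb1 : r ^ (2 - γ*C) ≤ 2 ^ (2 - γ*C) :=
      Real.rpow_le_rpow_of_nonpos two_pos hr2 (by linarith)
    have hb2 : (2:ℝ) ^ (2 - γ*C) ≤ (32*π^2*K)⁻¹ := by
      rw [Real.rpow_def_of_pos two_pos, ← Real.exp_log (by positivity : (0:ℝ) < (32*π^2*K)⁻¹),
        Real.log_inv]
      apply Real.exp_le_exp.mpr
      have h := (div_le_iff₀ hlog2).mp (by linarith : Real.log (32*π^2*K)/Real.log 2 ≤ γ*C - 2)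
      nlinarith
    have hfin : 4*π^2*K * (32*π^2*K)⁻¹ = 1/8 := by field_simp; ring
    calc 4*π^2*r^2*(K*Real.exp (-γ*T₀))
        = 4*π^2*K * (r^2 * r ^ (-(γ*C))) := by rw [he]; ring
    _ = 4*π^2*K * r ^ (2 - γ*C) := by rw [hcomb]
    _ ≤ 4*π^2*K * (32*π^2*K)⁻¹ :=
        mul_le_mul_of_nonneg_left (hb1.trans hb2) (by positivity)
    _ = 1/8 := hfin
  have hR2 : 8*π^2*ν*(r^2*T₀) ≤ 1/8 := by
    set L := Real.log ν⁻¹ with hLdef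
    have hL1 : 1 ≤ L := by
      rw [hLdef, Real.le_log_iff_exp_le (by positivity)]
      calc Real.exp 1 = (Real.exp (-1))⁻¹ := by rw [← Real.exp_neg]; ring_nf
      _ ≤ ν⁻¹ := inv_anti₀ hν hνe
    have hL0 : 0 < L := by linarith
    have hsL : 1 ≤ Real.sqrt L := by
      calc (1:ℝ) = Real.sqrt 1 := Real.sqrt_one.symm
      _ ≤ Real.sqrt L := Real.sqrt_le_sqrt hL1
    have hden : 1 ≤ C * Real.sqrt L := by nlinarith [hsL, hC2]
    have hrpow : (0:ℝ) < ν ^ (-(1/2) : ℝ) := Real.rpow_pos_of_pos hν _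
    have hlogr2 : Real.log r ≤ L/2 := by
      have h1 : r ≤ ν ^ (-(1/2) : ℝ) := hrν.trans (div_le_self hrpow.le hden)
      have h2 : Real.log r ≤ Real.log (ν ^ (-(1/2) : ℝ)) := Real.log_le_log hr0 h1
      rw [Real.log_rpow hν] at h2
      have hL' : L = -Real.log ν := by rw [hLdef, Real.log_inv]
      linarith
    have hsq : r^2 ≤ ν⁻¹ / (C^2 * L) := by
      have h1 : r^2 ≤ (ν ^ (-(1/2) : ℝ) / (C * Real.sqrt L))^2 :=
        pow_le_pow_left₀ hr0.le hrν 2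
      have h2 : (ν ^ (-(1/2) : ℝ))^2 = ν⁻¹ := by
        rw [← Real.rpow_natCast (ν ^ (-(1/2):ℝ)) 2, ← Real.rpow_mul hν.le]
        norm_num [Real.rpow_neg_one]
      have h3 : (C * Real.sqrt L)^2 = C^2 * L := by
        rw [mul_pow, Real.sq_sqrt hL0.le]
      rw [div_pow, h2, h3] at h1
      exact h1
    have hkey : ν * (r^2 * T₀) ≤ 1/(2*C) := by
      have h1 : r^2 * T₀ ≤ (ν⁻¹ / (C^2 * L)) * (C * (L/2)) := by
        rw [hT₀def]
        exact mul_le_mul hsq (mul_le_mul_of_nonneg_left hlogr2 hC0.le)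
          (by positivity) (by positivity)
      have h2 : ν * ((ν⁻¹ / (C^2 * L)) * (C * (L/2))) = 1/(2*C) := by
        field_simp
      calc ν * (r^2 * T₀) ≤ ν * ((ν⁻¹ / (C^2 * L)) * (C * (L/2))) :=
            mul_le_mul_of_nonneg_left h1 hν.le
      _ = 1/(2*C) := h2
    have h8 : 8*π^2*(1/(2*C)) ≤ 1/8 := by
      rw [mul_one_div, div_le_div_iff₀ (by positivity) (by norm_num)]
      nlinarith
    calc 8*π^2*ν*(r^2*T₀) = 8*π^2*(ν*(r^2*T₀)) := by ring
    _ ≤ 8*π^2*(1/(2*C)) := mul_le_mul_of_nonneg_left hkey (by positivity)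
    _ ≤ 1/8 := h8
  -- abbreviations
  set c₁ : ℝ≥0∞ := ENNReal.ofReal (4*π*r) with hc₁def
  set c₂ : ℝ≥0∞ := ENNReal.ofReal (4*π^2*r^2) with hc₂def
  set c₈ : ℝ≥0∞ := ENNReal.ofReal (8*π^2*ν) with hc₈def
  set Ff : Ω → ℝ≥0∞ := fun ω => ∫⁻ t in Set.Ioc (0:ℝ) T₀, W ω t * convMass w (a ω t) r
    with hFfdef
  set Hf : Ω → ℝ≥0∞ := fun ω => ∑' k : Fin d → ℤ, if k = 0 then 0 else
      (ENNReal.ofReal ((2 * π * znorm k) ^ 2))⁻¹ * (‖a ω T₀ k‖₊ : ℝ≥0∞) ^ 2 with hHfdef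
  set Pf : Ω → ℝ≥0∞ := fun ω => massOn (a ω 0) (Set.Ici r) with hPfdef
  -- measurability
  have hak : ∀ (t : ℝ) (k : Fin d → ℤ), Measurable fun ω => ((‖a ω t k‖₊ : ℝ≥0∞))^2 := by
    intro t k
    have h1 : Measurable fun ω => a ω t k :=
      (hameas k).comp (measurable_id.prodMk measurable_const)
    exact (measurable_coe_nnreal_ennreal.comp h1.nnnorm).pow_const 2
  have hat : ∀ (ω : Ω) (k : Fin d → ℤ), Measurable fun t => ((‖a ω t k‖₊ : ℝ≥0∞))^2 := by
    intro ω k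
    have h1 : Measurable fun t => a ω t k :=
      (hameas k).comp (measurable_const.prodMk measurable_id)
    exact (measurable_coe_nnreal_ennreal.comp h1.nnnorm).pow_const 2
  have hPmeas : Measurable Pf := by
    apply Measurable.ennreal_tsum
    intro k
    by_cases hk : znorm k ∈ Set.Ici r
    · simpa only [if_pos hk] using hak 0 k
    · simp only [if_neg hk]; exact measurable_const
  have hHmeas : Measurable Hf := by
    apply Measurable.ennreal_tsum
    intro k
    by_cases hk : k = 0
    · simp only [if_pos hk]; exact measurable_const
    · simp only [if_neg hk]; exact (hak T₀ k).const_mul _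
  -- a.e. key inequality
  have hkey : ∀ᵐ ω ∂ℙ, (1:ℝ≥0∞) ≤ Pf ω + (c₂ * Hf ω + (c₁ * Ff ω + ENNReal.ofReal (1/8))) := by
    filter_upwards [has, hflux] with ω hω hfl
    obtain ⟨h0, _hinit, hen⟩ := hω
    set DH : ℝ → ℝ≥0∞ := fun t => ∑' k : Fin d → ℤ, if r ≤ znorm k then
        ENNReal.ofReal (znorm k ^ 2) * (‖a ω t k‖₊ : ℝ≥0∞) ^ 2 else 0 with hDHdef
    set DL : ℝ → ℝ≥0∞ := fun t => ∑' k : Fin d → ℤ, if r ≤ znorm k then 0 else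
        ENNReal.ofReal (znorm k ^ 2) * (‖a ω t k‖₊ : ℝ≥0∞) ^ 2 with hDLdef
    have hDHmeas : Measurable DH := by
      apply Measurable.ennreal_tsum
      intro k
      by_cases hk : r ≤ znorm k
      · simp only [if_pos hk]; exact (hat ω k).const_mul _
      · simp only [if_neg hk]; exact measurable_const
    have hSle : ∀ t : ℝ, 0 < t → (∑' k : Fin d → ℤ, (‖a ω t k‖₊ : ℝ≥0∞) ^ 2) ≤ 1 :=
      fun t ht => le_of_le_of_eq (self_le_add_right _ _) (hen t ht)
    -- mass split at T₀
    have hmassT : (∑' k : Fin d → ℤ, (‖a ω T₀ k‖₊ : ℝ≥0∞) ^ 2)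
        = massOn (a ω T₀) (Set.Ici r)
          + ∑' k : Fin d → ℤ, if znorm k ∈ Set.Ici r then 0 else (‖a ω T₀ k‖₊ : ℝ≥0∞) ^ 2 :=
      tsum_ite_split (fun k => znorm k ∈ Set.Ici r) _
    -- dissipation split
    have hDsplit : (∫⁻ t in Set.Ioc (0:ℝ) T₀,
          ∑' k : Fin d → ℤ, ENNReal.ofReal (znorm k ^ 2) * (‖a ω t k‖₊ : ℝ≥0∞) ^ 2)
        = (∫⁻ t in Set.Ioc (0:ℝ) T₀, DH t) + ∫⁻ t in Set.Ioc (0:ℝ) T₀, DL t := by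
      rw [← lintegral_add_left hDHmeas]
      exact lintegral_congr fun t => tsum_ite_split (fun k => r ≤ znorm k) _
    -- low mass ≤ c₂ * Hf
    have hML : (∑' k : Fin d → ℤ, if znorm k ∈ Set.Ici r then 0 else (‖a ω T₀ k‖₊ : ℝ≥0∞) ^ 2)
        ≤ c₂ * Hf ω := by
      rw [hHfdef, ← ENNReal.tsum_mul_left]
      apply ENNReal.tsum_le_tsum
      intro k
      by_cases hk0 : k = 0
      · simp [hk0, h0 T₀]
      · by_cases hkr : znorm k ∈ Set.Ici r
        · simp [hkr]
        · rw [if_neg hkr, if_neg hk0]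
          have hz1 : 1 ≤ znorm k := one_le_znorm hk0
          have hzr : znorm k < r := lt_of_not_ge hkr
          have hzpos : (0:ℝ) < (2*π*znorm k)^2 := by positivity
          have hz2 : znorm k^2 ≤ r^2 := by nlinarith [znorm_nonneg k]
          have h4 : (2*π*znorm k)^2 ≤ 4*π^2*r^2 := by
            nlinarith [mul_le_mul_of_nonneg_left hz2 (show (0:ℝ) ≤ 4*π^2 by positivity)]
          have hone : (1:ℝ≥0∞) ≤ c₂ * (ENNReal.ofReal ((2*π*znorm k)^2))⁻¹ := by
            calc (1:ℝ≥0∞) = ENNReal.ofReal ((2*π*znorm k)^2)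
                * (ENNReal.ofReal ((2*π*znorm k)^2))⁻¹ :=
                  (ENNReal.mul_inv_cancel (ENNReal.ofReal_pos.mpr hzpos).ne'
                    ENNReal.ofReal_ne_top).symm
            _ ≤ c₂ * (ENNReal.ofReal ((2*π*znorm k)^2))⁻¹ :=
                  mul_le_mul_left (ENNReal.ofReal_le_ofReal h4) _
          calc ((‖a ω T₀ k‖₊ : ℝ≥0∞)) ^ 2 = 1 * (‖a ω T₀ k‖₊ : ℝ≥0∞) ^ 2 := (one_mul _).symm
          _ ≤ (c₂ * (ENNReal.ofReal ((2*π*znorm k)^2))⁻¹) * (‖a ω T₀ k‖₊ : ℝ≥0∞) ^ 2 :=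
                mul_le_mul_left hone _
          _ = c₂ * ((ENNReal.ofReal ((2*π*znorm k)^2))⁻¹ * (‖a ω T₀ k‖₊ : ℝ≥0∞) ^ 2) :=
                mul_assoc _ _ _
    -- low dissipation bound
    have hDL : c₈ * ∫⁻ t in Set.Ioc (0:ℝ) T₀, DL t ≤ ENNReal.ofReal (1/8) := by
      have hDLt : ∀ t ∈ Set.Ioc (0:ℝ) T₀, DL t ≤ ENNReal.ofReal (r^2) := by
        intro t ht
        have h1 : DL t ≤ ∑' k : Fin d → ℤ, ENNReal.ofReal (r^2) * (‖a ω t k‖₊ : ℝ≥0∞) ^ 2 := by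
          apply ENNReal.tsum_le_tsum
          intro k
          by_cases hk : r ≤ znorm k
          · simp [hk]
          · rw [if_neg hk]
            exact mul_le_mul_left (ENNReal.ofReal_le_ofReal
              (by nlinarith [znorm_nonneg k, lt_of_not_ge hk] : znorm k ^ 2 ≤ r^2)) _
        calc DL t ≤ ∑' k : Fin d → ℤ, ENNReal.ofReal (r^2) * (‖a ω t k‖₊ : ℝ≥0∞) ^ 2 := h1
        _ = ENNReal.ofReal (r^2) * ∑' k : Fin d → ℤ, (‖a ω t k‖₊ : ℝ≥0∞) ^ 2 :=
            ENNReal.tsum_mul_left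
        _ ≤ ENNReal.ofReal (r^2) * 1 := mul_le_mul_right (hSle t ht.1) _
        _ = ENNReal.ofReal (r^2) := mul_one _
      calc c₈ * ∫⁻ t in Set.Ioc (0:ℝ) T₀, DL t
          ≤ c₈ * ∫⁻ _ in Set.Ioc (0:ℝ) T₀, ENNReal.ofReal (r^2) :=
            mul_le_mul_right (setLIntegral_mono measurable_const hDLt) _
      _ = c₈ * (ENNReal.ofReal (r^2) * volume (Set.Ioc (0:ℝ) T₀)) := by
            rw [setLIntegral_const]
      _ = ENNReal.ofReal (8*π^2*ν * (r^2 * T₀)) := by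
            rw [Real.volume_Ioc, sub_zero, hc₈def, ← ENNReal.ofReal_mul (by positivity),
              ← ENNReal.ofReal_mul (by positivity)]
      _ ≤ ENNReal.ofReal (1/8) := ENNReal.ofReal_le_ofReal hR2
    -- assemble
    calc (1:ℝ≥0∞) = (∑' k : Fin d → ℤ, (‖a ω T₀ k‖₊ : ℝ≥0∞) ^ 2)
          + c₈ * (∫⁻ t in Set.Ioc (0:ℝ) T₀,
            ∑' k : Fin d → ℤ, ENNReal.ofReal (znorm k ^ 2) * (‖a ω t k‖₊ : ℝ≥0∞) ^ 2) :=
          (hen T₀ hT₀pos).symm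
    _ = (massOn (a ω T₀) (Set.Ici r)
          + ∑' k : Fin d → ℤ, if znorm k ∈ Set.Ici r then 0 else (‖a ω T₀ k‖₊ : ℝ≥0∞) ^ 2)
        + c₈ * ((∫⁻ t in Set.Ioc (0:ℝ) T₀, DH t) + ∫⁻ t in Set.Ioc (0:ℝ) T₀, DL t) := by
          rw [hmassT, hDsplit]
    _ = (massOn (a ω T₀) (Set.Ici r) + c₈ * ∫⁻ t in Set.Ioc (0:ℝ) T₀, DH t)
        + ((∑' k : Fin d → ℤ, if znorm k ∈ Set.Ici r then 0 else (‖a ω T₀ k‖₊ : ℝ≥0∞) ^ 2)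
          + c₈ * ∫⁻ t in Set.Ioc (0:ℝ) T₀, DL t) := by ring
    _ ≤ (Pf ω + c₁ * Ff ω) + (c₂ * Hf ω + ENNReal.ofReal (1/8)) :=
          add_le_add (hfl T₀ hT₀pos) (add_le_add hML hDL)
    _ = Pf ω + (c₂ * Hf ω + (c₁ * Ff ω + ENNReal.ofReal (1/8))) := by ring
  -- take expectations
  have int1 : ∫⁻ ω, Pf ω ∂ℙ ≤ ENNReal.ofReal (1/4) := by
    calc ∫⁻ ω, Pf ω ∂ℙ ≤ ∫⁻ _, ENNReal.ofReal (1/4) ∂ℙ := lintegral_mono_ae hmass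
    _ = ENNReal.ofReal (1/4) := by rw [lintegral_const, measure_univ, mul_one]
  have int2 : c₂ * ∫⁻ ω, Hf ω ∂ℙ ≤ ENNReal.ofReal (1/8) := by
    calc c₂ * ∫⁻ ω, Hf ω ∂ℙ ≤ c₂ * ENNReal.ofReal (K * Real.exp (-γ * T₀)) :=
          mul_le_mul_right (hmix T₀ hT₀pos.le) _
    _ = ENNReal.ofReal (4*π^2*r^2 * (K * Real.exp (-γ * T₀))) := by
          rw [hc₂def, ← ENNReal.ofReal_mul (by positivity)]
    _ ≤ ENNReal.ofReal (1/8) := ENNReal.ofReal_le_ofReal hR1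
  have hexp : (1:ℝ≥0∞) ≤ ENNReal.ofReal (1/2) + c₁ * ∫⁻ ω, Ff ω ∂ℙ := by
    have hsum : ENNReal.ofReal (1/4) + (ENNReal.ofReal (1/8)
        + (c₁ * ∫⁻ ω, Ff ω ∂ℙ + ENNReal.ofReal (1/8)))
        = ENNReal.ofReal (1/2) + c₁ * ∫⁻ ω, Ff ω ∂ℙ := by
      have h18 : ENNReal.ofReal (1/4) + ENNReal.ofReal (1/8) + ENNReal.ofReal (1/8)
          = ENNReal.ofReal (1/2) := by
        rw [← ENNReal.ofReal_add (by norm_num) (by norm_num),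
          ← ENNReal.ofReal_add (by norm_num) (by norm_num)]
        norm_num
      rw [← h18]; ring
    calc (1:ℝ≥0∞) = ∫⁻ _, 1 ∂ℙ := by rw [lintegral_one, measure_univ]
    _ ≤ ∫⁻ ω, (Pf ω + (c₂ * Hf ω + (c₁ * Ff ω + ENNReal.ofReal (1/8)))) ∂ℙ :=
          lintegral_mono_ae hkey
    _ = (∫⁻ ω, Pf ω ∂ℙ)
        + ∫⁻ ω, (c₂ * Hf ω + (c₁ * Ff ω + ENNReal.ofReal (1/8))) ∂ℙ :=
          lintegral_add_left hPmeas _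
    _ = (∫⁻ ω, Pf ω ∂ℙ) + (c₂ * ∫⁻ ω, Hf ω ∂ℙ
          + ∫⁻ ω, (c₁ * Ff ω + ENNReal.ofReal (1/8)) ∂ℙ) := by
          rw [lintegral_add_left (hHmeas.const_mul c₂), lintegral_const_mul c₂ hHmeas]
    _ = (∫⁻ ω, Pf ω ∂ℙ) + (c₂ * ∫⁻ ω, Hf ω ∂ℙ
          + (c₁ * ∫⁻ ω, Ff ω ∂ℙ + ENNReal.ofReal (1/8))) := by
          rw [lintegral_add_right _ measurable_const, lintegral_const, measure_univ, mul_one,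
            lintegral_const_mul' c₁ _ ENNReal.ofReal_ne_top]
    _ ≤ ENNReal.ofReal (1/4) + (ENNReal.ofReal (1/8)
          + (c₁ * ∫⁻ ω, Ff ω ∂ℙ + ENNReal.ofReal (1/8))) :=
          add_le_add int1 (add_le_add int2 le_rfl)
    _ = ENNReal.ofReal (1/2) + c₁ * ∫⁻ ω, Ff ω ∂ℙ := hsum
  -- extract lower bound on c₁ * EF
  have h12 : ENNReal.ofReal (1/2) ≤ c₁ * ∫⁻ ω, Ff ω ∂ℙ := by
    have h' : (1:ℝ≥0∞) - ENNReal.ofReal (1/2) ≤ c₁ * ∫⁻ ω, Ff ω ∂ℙ :=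
      tsub_le_iff_right.mpr (by rwa [add_comm] at hexp)
    calc ENNReal.ofReal (1/2) = 1 - ENNReal.ofReal (1/2) := by
          rw [← ENNReal.ofReal_one, ← ENNReal.ofReal_sub _ (by norm_num)]; norm_num
    _ ≤ c₁ * ∫⁻ ω, Ff ω ∂ℙ := h'
  have hEF : ENNReal.ofReal (1/(C*r)) ≤ ∫⁻ ω, Ff ω ∂ℙ := by
    have hc₁0 : c₁ ≠ 0 := by
      rw [hc₁def]
      exact (ENNReal.ofReal_pos.mpr (by positivity)).ne'
    have hc₁top : c₁ ≠ ⊤ := by rw [hc₁def]; exact ENNReal.ofReal_ne_top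
    have hdiv : ENNReal.ofReal (1/2) / c₁ ≤ ∫⁻ ω, Ff ω ∂ℙ :=
      (ENNReal.div_le_iff_le_mul (Or.inl hc₁0) (Or.inl hc₁top)).mpr
        (by rwa [mul_comm] at h12)
    refine le_trans ?_ hdiv
    rw [hc₁def, ← ENNReal.ofReal_div_of_pos (by positivity)]
    apply ENNReal.ofReal_le_ofReal
    rw [div_div]
    rw [one_div, one_div]
    apply inv_anti₀ (by positivity)
    have h8π : 8*π ≤ C := by nlinarith [hπ3, hCπ, mul_pos hπ hπ]
    nlinarith [mul_le_mul_of_nonneg_right h8π hr0.le]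
  -- conclude
  calc ENNReal.ofReal (1/(C*r)) ≤ ∫⁻ ω, Ff ω ∂ℙ := hEF
  _ ≤ ∫⁻ ω, (∫⁻ t in Set.Ioc (0:ℝ) T, W ω t * convMass w (a ω t) r) ∂ℙ :=
      lintegral_mono fun ω => lintegral_mono_set (Set.Ioc_subset_Ioc_right hT)
end
end

section
/- Let (Ω,ℱ,ℙ) be a probability space with expectation 𝔼. For each t ≥ 0 and ω ∈ Ω let m_{t,ω} be a Borel measure on [0,∞) with total mass m_{t,ω}([0,∞)) ≤ 1, jointly measurable in (t,ω) so that all integrals below are defined, and define the measure m(E) := 𝔼 ∫_0^∞ m_{t,·}(E) dt. Let W : Ω × [0,∞) → [0,∞] be jointly measurable, let p > 1 with conjugate exponent q = p/(p−1), and suppose 𝔼 W_t^p ≤ 𝔼 W_0^p < ∞ for all t ≥ 0. Let w be a weight with ∫_0^∞ w(s)^{−1} ds ≤ 1/2. Let N₀ ≥ 1, C₀ ≥ 1, and R ≥ max(N₀², 4), and suppose that for every r ∈ [max(C₀, N₀), R] one has 𝔼 ∫_0^{C₀ log R} W_t · (w^{−1} * m_{t,·})(r) dt ≥ 1/(C₀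 r). Then there is a constant C depending only on C₀ and N₀ such that for every α > 0: μ_{N₀,R}( { r ∈ [max(C₀,N₀), R] : (w^{−1} * m)(r) ≤ α/r } ) ≤ C^p (𝔼 W_0^p) α^{p−1}. -/
open MeasureTheory ENNReal Real Set
open scoped Classical

noncomputable section

/-! Write `f = w⁻¹ * m_{t,ω}` and `S` for the undercharged set. Since `∫ w(|s|)⁻¹ ds ≤ 1`, every
`f` has total mass at most `1` in `r`. On `S` the flux hypothesis gives `1/r ≤ C₀ 𝔼 ∫₀ᵀ W f(r) dt`
with `T = C₀ log R`. Integrating over `S` and applying Hölder with respect to the measure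
`f dr dt dℙ` bounds `∫_S dr/r` by `C₀ (T 𝔼 W₀^p)^{1/p} (α ∫_S dr/r)^{1/q}`, the last factor because
the aggregate mass is at most `α/r` on `S`. Absorbing it gives `∫_S dr/r ≤ C₀^p T 𝔼 W₀^p α^{p-1}`,
and `log (R/N₀) ≥ (log R)/2` turns this into the claimed bound with `C = 2 C₀²`. -/

theorem measurable_lintegral_of_measurable_coe {α β γ : Type*} [MeasurableSpace α]
    [MeasurableSpace β] [MeasurableSpace γ] {m : α → Measure γ}
    (hm : ∀ E, MeasurableSet E → Measurable fun a => m a E) {C : ℝ≥0∞} (hC : C ≠ ∞)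
    (hmC : ∀ a, m a univ ≤ C) {k : β → γ → ℝ≥0∞}
    (hk : Measurable (Function.uncurry k)) :
    Measurable fun x : β × α => ∫⁻ z, k x.1 z ∂(m x.2) := by
  let κ : ProbabilityTheory.Kernel (β × α) γ :=
    ⟨fun x => m x.2, (Measure.measurable_of_measurable_coe _ hm).comp measurable_snd⟩
  have : ProbabilityTheory.IsFiniteKernel κ := ⟨C, hC.lt_top, fun x => hmC x.2⟩
  exact Measurable.lintegral_kernel_prod_right' (κ := κ) (f := fun y => k y.1.1 y.2)
    (hk.comp (measurable_fst.fst.prodMk measurable_snd))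

theorem lintegral_lintegral_comp_sub {G : Type*} [AddGroup G] [MeasurableSpace G]
    [MeasurableAdd₂ G] [MeasurableNeg G] (μ : Measure G) [μ.IsAddRightInvariant] [SFinite μ]
    (ν : Measure G) [SFinite ν] {k : G → ℝ≥0∞} (hk : Measurable k) :
    ∫⁻ x, ∫⁻ z, k (x - z) ∂ν ∂μ = ν univ * ∫⁻ x, k x ∂μ := by
  rw [lintegral_lintegral_swap (f := fun x z => k (x - z))
    (hk.comp (measurable_sub : Measurable fun p : G × G => p.1 - p.2)).aemeasurable]
  simp_rw [lintegral_sub_right_eq_self k]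
  rw [lintegral_const, mul_comm]

theorem lintegral_comp_abs_le {h : ℝ → ℝ≥0∞} (hh : Measurable fun x => h |x|) :
    ∫⁻ x, h |x| ≤ 2 * ∫⁻ x in Ici 0, h x := by
  set g := (Ici (0 : ℝ)).indicator fun x => h |x|
  have hg : Measurable g := hh.indicator measurableSet_Ici
  have hsplit : ∀ x, h |x| ≤ g x + g (-x) := by
    intro x
    rcases le_total 0 x with hx | hx
    · exact le_add_right (by simp [g, hx])
    · exact le_add_left (by simp [g, hx, abs_neg])
  calc ∫⁻ x, h |x| ≤ ∫⁻ x, g x + g (-x) := lintegral_mono hsplit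
    _ = 2 * ∫⁻ x, g x := by
      rw [lintegral_add_left hg, lintegral_neg_eq_self (fun x => g x), two_mul]
    _ = 2 * ∫⁻ x in Ici 0, h x := by
      rw [lintegral_indicator measurableSet_Ici]
      exact congrArg _ (setLIntegral_congr_fun measurableSet_Ici fun x hx => by
        rw [abs_of_nonneg hx])

theorem lintegral_prod_le_measure_univ_mul {α β : Type*} [MeasurableSpace α] [MeasurableSpace β]
    (μ : Measure α) (ν : Measure β) [SFinite μ] [SFinite ν] {G : α × β → ℝ≥0∞}
    (hG : Measurable G) {b : ℝ≥0∞} (hb : ∀ᵐ y ∂ν, ∫⁻ x, G (x, y) ∂μ ≤ b) :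
    ∫⁻ z, G z ∂(μ.prod ν) ≤ ν univ * b := calc
  ∫⁻ z, G z ∂(μ.prod ν) = ∫⁻ y, ∫⁻ x, G (x, y) ∂μ ∂ν := lintegral_prod_symm _ hG.aemeasurable
  _ ≤ ∫⁻ _, b ∂ν := lintegral_mono_ae hb
  _ = ν univ * b := by rw [lintegral_const, mul_comm]

theorem ENNReal.le_of_le_mul_rpow_mul_rpow {M A a c : ℝ≥0∞} {p q : ℝ}
    (hpq : p.HolderConjugate q) (hM : M ≠ ∞) (h : M ≤ c * (A ^ (1 / p) * (a * M) ^ (1 / q))) :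
    M ≤ c ^ p * A * a ^ (p - 1) := by
  rcases eq_or_ne M 0 with rfl | hM0
  · exact zero_le
  have hp' : 0 ≤ 1 / p := one_div_nonneg.2 hpq.nonneg
  have hq' : 0 ≤ 1 / q := one_div_nonneg.2 hpq.symm.nonneg
  have hsplit : M = M ^ (1 / p) * M ^ (1 / q) := by
    rw [← ENNReal.rpow_add_of_nonneg _ _ hp' hq', one_div, one_div, hpq.inv_add_inv_eq_one,
      ENNReal.rpow_one]
  have hroot : M ^ (1 / p) ≤ c * A ^ (1 / p) * a ^ (1 / q) := by
    refine (ENNReal.mul_le_mul_iff_left ?_ ?_).1 (hsplit.symm.trans_le (h.trans_eq ?_))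
    · exact (ENNReal.rpow_pos (pos_iff_ne_zero.2 hM0) hM).ne'
    · exact ENNReal.rpow_ne_top_of_nonneg hq' hM
    · rw [ENNReal.mul_rpow_of_nonneg _ _ hq']
      ring
  have hp1 : 1 / q * p = p - 1 := by
    have := hpq.sub_one_mul_conj
    field_simp [hpq.symm.ne_zero]
    linarith
  calc M = (M ^ (1 / p)) ^ p := by
        rw [← ENNReal.rpow_mul, one_div_mul_cancel hpq.ne_zero, ENNReal.rpow_one]
    _ ≤ (c * A ^ (1 / p) * a ^ (1 / q)) ^ p := ENNReal.rpow_le_rpow hroot hpq.nonneg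
    _ = c ^ p * A * a ^ (p - 1) := by
        rw [ENNReal.mul_rpow_of_nonneg _ _ hpq.nonneg, ENNReal.mul_rpow_of_nonneg _ _ hpq.nonneg,
          ← ENNReal.rpow_mul, ← ENNReal.rpow_mul, one_div_mul_cancel hpq.ne_zero,
          ENNReal.rpow_one, hp1]

theorem ENNReal.lintegral_le_Lp_mul_measure_univ {X : Type*} [MeasurableSpace X] (ξ : Measure X)
    {p q : ℝ} (hpq : p.HolderConjugate q) {f : X → ℝ≥0∞} (hf : AEMeasurable f ξ) :
    ∫⁻ x, f x ∂ξ ≤ (∫⁻ x, f x ^ p ∂ξ) ^ (1 / p) * ξ univ ^ (1 / q) := by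
  simpa using ENNReal.lintegral_mul_le_Lp_mul_Lq ξ hpq hf (aemeasurable_const (b := 1))

theorem lintegral_le_of_holder_absorption {X Y : Type*} [MeasurableSpace X] [MeasurableSpace Y]
    (μ : Measure X) (ν : Measure Y) [SFinite μ] [SFinite ν] {F : Y → X → ℝ≥0∞}
    (hF : Measurable (Function.uncurry F)) {W : X → ℝ≥0∞} (hW : Measurable W) {ρ : Y → ℝ≥0∞}
    {p q : ℝ} (hpq : p.HolderConjugate q) {a c : ℝ≥0∞} (ha : a ≠ ∞) (hc : c ≠ ∞)
    (hmass : ∀ x, ∫⁻ y, F y x ∂ν ≤ 1)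
    (hupper : ∀ᵐ y ∂ν, ∫⁻ x, F y x ∂μ ≤ a * ρ y)
    (hlower : ∀ᵐ y ∂ν, ρ y ≤ c * ∫⁻ x, W x * F y x ∂μ)
    (hρ : ∫⁻ y, ρ y ∂ν ≠ ∞) :
    ∫⁻ y, ρ y ∂ν ≤ c ^ p * (∫⁻ x, W x ^ p ∂μ) * a ^ (p - 1) := by
  set M := ∫⁻ y, ρ y ∂ν
  set ξ := (ν.prod μ).withDensity (Function.uncurry F)
  have hW₂ : Measurable fun z : Y × X => W z.2 := hW.comp measurable_snd
  have hξ_univ : ξ univ ≤ a * M := calc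
    ξ univ = ∫⁻ y, ∫⁻ x, F y x ∂μ ∂ν := by
      rw [withDensity_apply _ MeasurableSet.univ, Measure.restrict_univ,
        lintegral_prod _ hF.aemeasurable]
      rfl
    _ ≤ ∫⁻ y, a * ρ y ∂ν := lintegral_mono_ae hupper
    _ = a * M := lintegral_const_mul' _ _ ha
  have hξ_Wp : ∫⁻ z, W z.2 ^ p ∂ξ ≤ ∫⁻ x, W x ^ p ∂μ := calc
    ∫⁻ z, W z.2 ^ p ∂ξ = ∫⁻ x, W x ^ p * ∫⁻ y, F y x ∂ν ∂μ := by
      rw [lintegral_withDensity_eq_lintegral_mul _ hF (hW₂.pow_const p),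
        lintegral_prod_symm _ (hF.mul (hW₂.pow_const p)).aemeasurable]
      refine lintegral_congr fun x => ?_
      simp only [Pi.mul_apply, Function.uncurry_apply_pair, mul_comm (F _ x)]
      exact lintegral_const_mul _ (hF.comp measurable_prodMk_right)
    _ ≤ ∫⁻ x, W x ^ p * 1 ∂μ := by gcongr with x; exact hmass x
    _ = ∫⁻ x, W x ^ p ∂μ := by simp only [mul_one]
  have hM : M ≤ c * ∫⁻ z, W z.2 ∂ξ := calc
    M ≤ ∫⁻ y, c * ∫⁻ x, W x * F y x ∂μ ∂ν := lintegral_mono_ae hlower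
    _ = c * ∫⁻ z, W z.2 ∂ξ := by
      rw [lintegral_const_mul' _ _ hc, lintegral_withDensity_eq_lintegral_mul _ hF hW₂,
        lintegral_prod _ (hF.mul hW₂).aemeasurable]
      simp only [Pi.mul_apply, Function.uncurry_apply_pair, mul_comm]
  refine ENNReal.le_of_le_mul_rpow_mul_rpow hpq hρ (hM.trans (mul_le_mul_right ?_ c))
  refine (ENNReal.lintegral_le_Lp_mul_measure_univ ξ hpq hW₂.aemeasurable).trans ?_
  exact mul_le_mul' (ENNReal.rpow_le_rpow hξ_Wp (by simp [hpq.nonneg]))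
    (ENNReal.rpow_le_rpow hξ_univ (by simp [hpq.symm.nonneg]))

theorem setLIntegral_inv_le_of_flux_lower_bound {X : Type*} [MeasurableSpace X]
    (μ : Measure X) [SFinite μ] {F : ℝ → X → ℝ≥0∞} (hF : Measurable (Function.uncurry F))
    {W : X → ℝ≥0∞} (hW : Measurable W) {G : ℝ → ℝ≥0∞} (hG : Measurable G) {p q : ℝ}
    (hpq : p.HolderConjugate q) {a b C₀ α : ℝ} (ha : 0 < a) (hC₀ : 0 < C₀) (hα : 0 < α)
    (hmass : ∀ x, ∫⁻ r, F r x ≤ 1) (hFG : ∀ r, ∫⁻ x, F r x ∂μ ≤ G r)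
    (hflux : ∀ r ∈ Icc a b, ENNReal.ofReal (1 / (C₀ * r)) ≤ ∫⁻ x, W x * F r x ∂μ) :
    ∫⁻ r in {r | r ∈ Icc a b ∧ G r ≤ ENNReal.ofReal (α / r)}, ENNReal.ofReal r⁻¹ ≤
      ENNReal.ofReal C₀ ^ p * (∫⁻ x, W x ^ p ∂μ) * ENNReal.ofReal α ^ (p - 1) := by
  set S := {r | r ∈ Icc a b ∧ G r ≤ ENNReal.ofReal (α / r)}
  have hS : MeasurableSet S := measurableSet_Icc.inter
    (measurableSet_le hG (ENNReal.measurable_ofReal.comp (measurable_const.div measurable_id)))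
  have hbound : ∫⁻ r in S, ENNReal.ofReal r⁻¹ ≤ ENNReal.ofReal a⁻¹ * volume (Icc a b) := calc
    ∫⁻ r in S, ENNReal.ofReal r⁻¹ ≤ ∫⁻ _ in S, ENNReal.ofReal a⁻¹ :=
        setLIntegral_mono measurable_const fun r hr => ofReal_le_ofReal (inv_anti₀ ha hr.1.1)
    _ ≤ ENNReal.ofReal a⁻¹ * volume (Icc a b) := by
        rw [setLIntegral_const]
        exact mul_le_mul_right (measure_mono fun r hr => hr.1) _
  have hfin := (hbound.trans_lt (mul_lt_top ofReal_lt_top measure_Icc_lt_top)).ne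
  refine lintegral_le_of_holder_absorption μ _ hF hW hpq ofReal_ne_top ofReal_ne_top
    (fun x => (setLIntegral_le_lintegral _ _).trans (hmass x)) ?_ ?_ hfin
  · refine ae_restrict_of_forall_mem hS fun r hr => (hFG r).trans (hr.2.trans_eq ?_)
    rw [div_eq_mul_inv, ofReal_mul hα.le]
  · refine ae_restrict_of_forall_mem hS fun r hr => ?_
    have hr0 : 0 < r := ha.trans_le hr.1.1
    calc ENNReal.ofReal r⁻¹ = ENNReal.ofReal C₀ * ENNReal.ofReal (1 / (C₀ * r)) := by
          rw [← ofReal_mul hC₀.le]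
          congr 1
          field_simp
      _ ≤ _ := by gcongr; exact hflux r hr.1

theorem IsWeight.measurable_comp_abs {w : ℝ → ℝ≥0∞} (hw : IsWeight w) :
    Measurable fun s => w |s| := by
  have hmono : Monotone fun s => w (max s 0) := fun a b hab =>
    hw.1 (le_max_right a 0) (le_max_right b 0) (max_le_max hab le_rfl)
  have hcomp : (fun s => w |s|) = (fun s => w (max s 0)) ∘ abs :=
    funext fun s => by simp [abs_nonneg]
  exact hcomp ▸ hmono.measurable.comp measurable_abs

/-- The paper's `(w⁻¹ * ν)(r)`. -/
def convInvWeight (w : ℝ → ℝ≥0∞) (ν : Measure ℝ) (r : ℝ) : ℝ≥0∞ :=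
  ∫⁻ z in Ici 0, (w |r - z|)⁻¹ ∂ν

theorem IsWeight.measurable_convInvWeight {w : ℝ → ℝ≥0∞} (hw : IsWeight w) {α : Type*}
    [MeasurableSpace α] {m : α → Measure ℝ} (hm : ∀ E, MeasurableSet E → Measurable fun a => m a E)
    {C : ℝ≥0∞} (hC : C ≠ ∞) (hmC : ∀ a, m a univ ≤ C) :
    Measurable fun x : ℝ × α => convInvWeight w (m x.2) x.1 :=
  measurable_lintegral_of_measurable_coe (m := fun a => (m a).restrict (Ici 0))
    (fun E hE => by simpa only [Measure.restrict_apply hE] using hm _ (hE.inter measurableSet_Ici))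
    hC (fun a => (Measure.restrict_apply_univ _).trans_le
      ((measure_mono (subset_univ _)).trans (hmC a)))
    (k := fun r z => (w |r - z|)⁻¹) (hw.measurable_comp_abs.comp measurable_sub).inv

theorem IsWeight.lintegral_convInvWeight_le_one {w : ℝ → ℝ≥0∞} (hw : IsWeight w)
    (hw2 : ∫⁻ s in Ici 0, (w s)⁻¹ ≤ 1 / 2) (ν : Measure ℝ) (hν : ν univ ≤ 1) :
    ∫⁻ r, convInvWeight w ν r ≤ 1 := calc
  ∫⁻ r, convInvWeight w ν r = ν (Ici 0) * ∫⁻ s, (w |s|)⁻¹ := by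
    have : IsFiniteMeasure ν := ⟨hν.trans_lt one_lt_top⟩
    rw [← Measure.restrict_apply_univ]
    exact lintegral_lintegral_comp_sub volume _ hw.measurable_comp_abs.inv
  _ ≤ 1 * (2 * (1 / 2)) := by
    gcongr
    · exact (measure_mono (subset_univ _)).trans hν
    · exact (lintegral_comp_abs_le (h := fun s => (w s)⁻¹) hw.measurable_comp_abs.inv).trans
        (by gcongr)
  _ = 1 := by rw [one_mul, ENNReal.mul_div_cancel two_ne_zero ofNat_ne_top]

theorem log_le_two_mul_log_div {N R : ℝ} (hN : 0 < N) (hNR : N ^ 2 ≤ R) :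
    Real.log R ≤ 2 * Real.log (R / N) := by
  have hR : 0 < R := (by positivity : 0 < N ^ 2).trans_le hNR
  have hlog := Real.log_le_log (by positivity) hNR
  rw [Real.log_pow] at hlog
  rw [Real.log_div hR.ne' hN.ne']
  push_cast at hlog
  linarith

theorem inv_ofReal_log_div_mul_le {C N R p : ℝ} (hC : 1 ≤ C) (hN : 1 ≤ N) (hNR : N ^ 2 ≤ R)
    (hR : 1 < R) (hp : 1 ≤ p) :
    (ENNReal.ofReal (Real.log (R / N)))⁻¹ * (ENNReal.ofReal C ^ p *
      ENNReal.ofReal (C * Real.log R)) ≤ ENNReal.ofReal ((2 * C ^ 2) ^ p) := by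
  have hlogR : 0 < Real.log R := Real.log_pos hR
  have hL := log_le_two_mul_log_div (by linarith) hNR
  rw [ofReal_rpow_of_pos (by linarith), ← ofReal_mul (by positivity), ← ENNReal.div_eq_inv_mul,
    ← ofReal_div_of_pos (by linarith)]
  refine ofReal_le_ofReal ((div_le_iff₀ (by linarith)).2 ?_)
  calc C ^ p * (C * Real.log R) ≤ 2 * C * C ^ p * Real.log (R / N) := by
        have : 0 ≤ C ^ p * C := by positivity
        nlinarith
    _ ≤ (2 * C) ^ p * C ^ p * Real.log (R / N) := by
        gcongr
        · linarith
        · exact Real.self_le_rpow_of_one_le (by linarith) hp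
    _ = (2 * C ^ 2) ^ p * Real.log (R / N) := by
        rw [← Real.mul_rpow (by positivity) (by positivity)]
        ring_nf

/-- if the expected time-localized flux is at least `1/(C₀ r)` for all radii
in `[max(C₀,N₀), R]`, then the radii where the convolved aggregate mass `(w⁻¹ * m)(r)` is
undercharged have small logarithmic density. -/
theorem undercharged_convolved_density_bound (C₀ N₀ : ℝ) (hC₀ : 1 ≤ C₀) (hN₀ : 1 ≤ N₀) :
    ∃ C : ℝ, 0 < C ∧
      ∀ (Ω : Type) [MeasurableSpace Ω] (ℙ : Measure Ω) [IsProbabilityMeasure ℙ]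
        (m : Ω → ℝ → Measure ℝ),
      (∀ (ω : Ω) (t : ℝ), m ω t Set.univ ≤ 1) →
      (∀ (ω : Ω) (t : ℝ), m ω t (Set.Iio 0) = 0) →
      (∀ E : Set ℝ, MeasurableSet E → Measurable fun p : Ω × ℝ => m p.1 p.2 E) →
      ∀ (W : Ω → ℝ → ℝ≥0∞), Measurable (fun p : Ω × ℝ => W p.1 p.2) →
      ∀ p : ℝ, 1 < p →
      (∀ t : ℝ, 0 ≤ t → (∫⁻ ω, W ω t ^ p ∂ℙ) ≤ ∫⁻ ω, W ω 0 ^ p ∂ℙ) →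
      (∫⁻ ω, W ω 0 ^ p ∂ℙ) ≠ ⊤ →
      ∀ (w : ℝ → ℝ≥0∞), IsWeight w →
      (∫⁻ s in Set.Ici (0 : ℝ), (w s)⁻¹) ≤ 1 / 2 →
      ∀ R : ℝ, max (N₀ ^ 2) 4 ≤ R →
      (∀ r : ℝ, r ∈ Set.Icc (max C₀ N₀) R →
        ENNReal.ofReal (1 / (C₀ * r)) ≤
          ∫⁻ ω, (∫⁻ t in Set.Ioc 0 (C₀ * Real.log R),
            W ω t * ∫⁻ z in Set.Ici (0 : ℝ), (w |r - z|)⁻¹ ∂(m ω t)) ∂ℙ) →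
      ∀ α : ℝ, 0 < α →
        logDensity N₀ R {r : ℝ | r ∈ Set.Icc (max C₀ N₀) R ∧
            (∫⁻ ω, (∫⁻ t in Set.Ici (0 : ℝ),
              ∫⁻ z in Set.Ici (0 : ℝ), (w |r - z|)⁻¹ ∂(m ω t)) ∂ℙ) ≤ ENNReal.ofReal (α / r)}
          ≤ ENNReal.ofReal (C ^ p) * (∫⁻ ω, W ω 0 ^ p ∂ℙ) * ENNReal.ofReal (α ^ (p - 1)) := by
  refine ⟨2 * C₀ ^ 2, by positivity, ?_⟩
  intro Ω _ ℙ _ m hm1 _ hmE W hW p hp hWt _ w hw hwhalf R hR hflux α hα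
  have hR1 : 1 < R := by linarith [le_max_right (N₀ ^ 2) 4]
  have hRN : N₀ ^ 2 ≤ R := (le_max_left _ _).trans hR
  set T := C₀ * Real.log R
  set μ := ℙ.prod (volume.restrict (Ioc 0 T))
  set F : ℝ → Ω × ℝ → ℝ≥0∞ := fun r x => convInvWeight w (m x.1 x.2) r
  have hF : Measurable (Function.uncurry F) :=
    hw.measurable_convInvWeight hmE one_ne_top fun x => hm1 x.1 x.2
  have hG : Measurable fun r => ∫⁻ ω, (∫⁻ t in Ici 0, F r (ω, t)) ∂ℙ := by fun_prop
  have hM := setLIntegral_inv_le_of_flux_lower_bound μ hF hW hG (.conjExponent hp)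
    (lt_max_of_lt_left (by linarith)) (by linarith) hα
    (fun x => hw.lintegral_convInvWeight_le_one hwhalf _ (hm1 x.1 x.2))
    (fun r => (lintegral_prod (F r) (hF.comp measurable_prodMk_left).aemeasurable).trans_le
      (lintegral_mono fun ω => lintegral_mono_set (Ioc_subset_Ioi_self.trans Ioi_subset_Ici_self)))
    (fun r hr => (hflux r hr).trans_eq
      (lintegral_prod _ (hW.mul (hF.comp measurable_prodMk_left)).aemeasurable).symm)
  have hWp : ∫⁻ x, W x.1 x.2 ^ p ∂μ ≤ ENNReal.ofReal T * ∫⁻ ω, W ω 0 ^ p ∂ℙ := by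
    have := lintegral_prod_le_measure_univ_mul ℙ (volume.restrict (Ioc 0 T)) (hW.pow_const p)
      (ae_restrict_of_forall_mem measurableSet_Ioc fun t ht => hWt t ht.1.le)
    rwa [Measure.restrict_apply_univ, Real.volume_Ioc, sub_zero] at this
  calc logDensity N₀ R _
      ≤ (ENNReal.ofReal (Real.log (R / N₀)))⁻¹ * (ENNReal.ofReal C₀ ^ p *
          (ENNReal.ofReal T * ∫⁻ ω, W ω 0 ^ p ∂ℙ) * ENNReal.ofReal α ^ (p - 1)) := by
        rw [logDensity]
        gcongr
        exact (lintegral_mono_set inter_subset_left).trans (hM.trans (by gcongr))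
    _ = (ENNReal.ofReal (Real.log (R / N₀)))⁻¹ * (ENNReal.ofReal C₀ ^ p * ENNReal.ofReal T) *
          (∫⁻ ω, W ω 0 ^ p ∂ℙ) * ENNReal.ofReal α ^ (p - 1) := by ring
    _ ≤ _ := by
        rw [ofReal_rpow_of_pos hα]
        gcongr
        exact inv_ofReal_log_div_mul_le hC₀ hN₀ hRN hR1 hp.le
end
end

section
/- Let d ≥ 1, K ≥ 1, γ > 0, and let (Ω,ℱ,ℙ) be a probability space with expectation 𝔼. Let a : Ω × [0,∞) → (ℤ^d → ℂ) be jointly measurable with a_t(0) = 0 almost surely, 𝔼 Σ_k |a_t(k)|² ≤ 1 for all t ≥ 0, and 𝔼 Σ_{k≠0} (2π|k|)^{−2} |a_t(k)|² ≤ K e^{−γt} for all t ≥ 0. Then there is a constant C, depending only on K and γ, such that for all R ≥ 2: ∫_0^∞ 𝔼 Σ_{k : 0 < |k| ≤ R} |a_t(k)|² dt ≤ C log R. -/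
open MeasureTheory ENNReal Real Set
open scoped Classical

noncomputable section

lemma exp_integral_Ioi' {γ : ℝ} (hγ : 0 < γ) (T : ℝ) :
    ∫ x in Ioi T, Real.exp (-γ * x) = Real.exp (-γ * T) / γ := by
  have hderiv : ∀ x ∈ Ici T, HasDerivAt (fun x => -Real.exp (-γ * x) / γ)
      (Real.exp (-γ * x)) x := by
    intro x _
    have h := (((hasDerivAt_id x).const_mul (-γ)).exp.neg.div_const γ)
    simpa [mul_comm, hγ.ne', div_eq_mul_inv, mul_assoc] using h
  have htend : Filter.Tendsto (fun x => -Real.exp (-γ * x) / γ) Filter.atTop (nhds (-0 / γ)) := by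
    refine Filter.Tendsto.div_const (Filter.Tendsto.neg ?_) _
    exact Real.tendsto_exp_atBot.comp (Filter.tendsto_id.const_mul_atTop_of_neg (by linarith))
  have := integral_Ioi_of_hasDerivAt_of_tendsto' hderiv (exp_neg_integrableOn_Ioi T hγ) htend
  rw [this]; ring

lemma lintegral_exp_Ici' {γ : ℝ} (hγ : 0 < γ) (T : ℝ) (c : ℝ) (hc : 0 ≤ c) :
    ∫⁻ x in Ici T, ENNReal.ofReal (c * Real.exp (-γ * x)) =
      ENNReal.ofReal (c * Real.exp (-γ * T) / γ) := by
  rw [← restrict_Ioi_eq_restrict_Ici, ← ofReal_integral_eq_lintegral_ofReal]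
  · rw [MeasureTheory.integral_const_mul, exp_integral_Ioi' hγ T, mul_div_assoc]
  · exact ((exp_neg_integrableOn_Ioi T hγ).const_mul c)
  · filter_upwards with x; positivity

/-- the cumulative upper bound `m([1,R]) ≤ C log R` for the asymptotic mass
measure, as a consequence of exponential mixing. -/
theorem cumulative_upper_bound (K γ : ℝ) (hK : 1 ≤ K) (hγ : 0 < γ) :
    ∃ C : ℝ, 0 < C ∧
      ∀ (d : ℕ), 1 ≤ d →
      ∀ (Ω : Type) [MeasurableSpace Ω] (ℙ : Measure Ω) [IsProbabilityMeasure ℙ]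
        (a : Ω → ℝ → (Fin d → ℤ) → ℂ),
      (∀ k : Fin d → ℤ, Measurable fun p : Ω × ℝ => a p.1 p.2 k) →
      (∀ᵐ ω ∂ℙ, ∀ t : ℝ, a ω t 0 = 0) →
      (∀ t : ℝ, 0 ≤ t → (∫⁻ ω, (∑' k : Fin d → ℤ, (‖a ω t k‖₊ : ℝ≥0∞) ^ 2) ∂ℙ) ≤ 1) →
      (∀ t : ℝ, 0 ≤ t →
        (∫⁻ ω, (∑' k : Fin d → ℤ, if k = 0 then 0 else
            (ENNReal.ofReal ((2 * π * znorm k) ^ 2))⁻¹ * (‖a ω t k‖₊ : ℝ≥0∞) ^ 2) ∂ℙ)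
          ≤ ENNReal.ofReal (K * Real.exp (-γ * t))) →
      ∀ R : ℝ, 2 ≤ R →
        (∫⁻ t in Set.Ici (0 : ℝ), ∫⁻ ω, (∑' k : Fin d → ℤ,
            if 0 < znorm k ∧ znorm k ≤ R then (‖a ω t k‖₊ : ℝ≥0∞) ^ 2 else 0) ∂ℙ)
          ≤ ENNReal.ofReal (C * Real.log R) := by
  have hπ : 0 < π := Real.pi_pos
  have hlog2 : 0 < Real.log 2 := Real.log_pos (by norm_num)
  refine ⟨2 / γ + 4 * π ^ 2 * K / (γ * Real.log 2),
    add_pos (div_pos two_pos hγ) (div_pos (by positivity) (mul_pos hγ hlog2)), ?_⟩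
  intro d hd Ω _ ℙ _ a hmeas hzero hmass hmix R hR
  have hR0 : (0 : ℝ) < R := by linarith
  have hlogR : Real.log 2 ≤ Real.log R := Real.log_le_log (by norm_num) hR
  have hlogR0 : 0 < Real.log R := lt_of_lt_of_le hlog2 hlogR
  set T : ℝ := 2 / γ * Real.log R with hT
  have hT0 : 0 ≤ T := by positivity
  set A : ℝ := (2 * π * R) ^ 2 with hA
  have hA0 : 0 ≤ A := by positivity
  set g : ℝ → ℝ≥0∞ := fun t => ∫⁻ ω, (∑' k : Fin d → ℤ,
      if 0 < znorm k ∧ znorm k ≤ R then (‖a ω t k‖₊ : ℝ≥0∞) ^ 2 else 0) ∂ℙ with hg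
  -- termwise bound
  have hterm : ∀ (k : Fin d → ℤ) (x : ℝ≥0∞),
      (if 0 < znorm k ∧ znorm k ≤ R then x else 0)
        ≤ ENNReal.ofReal A * (if k = 0 then 0 else
            (ENNReal.ofReal ((2 * π * znorm k) ^ 2))⁻¹ * x) := by
    intro k x
    by_cases h : 0 < znorm k ∧ znorm k ≤ R
    · have hk0 : ¬ k = 0 := by
        rintro rfl
        simp [znorm] at h
        try exact lt_irrefl 0 h.1
      rw [if_pos h, if_neg hk0, ← mul_assoc]
      have hB : 0 < (2 * π * znorm k) ^ 2 := pow_pos (mul_pos (by positivity) h.1) 2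
      have hAB : ENNReal.ofReal A * (ENNReal.ofReal ((2 * π * znorm k) ^ 2))⁻¹
          = ENNReal.ofReal (A / (2 * π * znorm k) ^ 2) := by
        rw [ENNReal.ofReal_div_of_pos hB, div_eq_mul_inv]
      rw [hAB]
      have h1 : (1 : ℝ) ≤ A / (2 * π * znorm k) ^ 2 := by
        rw [le_div_iff₀ hB, hA]
        nlinarith [mul_le_mul_of_nonneg_left (mul_le_mul h.2 h.2 h.1.le hR0.le) (sq_nonneg π)]
      calc x = 1 * x := (one_mul x).symm
        _ ≤ ENNReal.ofReal (A / (2 * π * znorm k) ^ 2) * x :=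
            mul_le_mul_left (ENNReal.one_le_ofReal.mpr h1) x
    · simp [h]
  -- g t ≤ 1
  have hg1 : ∀ t : ℝ, 0 ≤ t → g t ≤ 1 := by
    intro t ht
    refine le_trans (lintegral_mono fun ω => ?_) (hmass t ht)
    refine ENNReal.tsum_le_tsum fun k => ?_
    split <;> simp
  -- g t ≤ ofReal (A * K * exp (-γ t))
  have hg2 : ∀ t : ℝ, 0 ≤ t → g t ≤ ENNReal.ofReal (A * K * Real.exp (-γ * t)) := by
    intro t ht
    have step1 : g t ≤ ENNReal.ofReal A * ∫⁻ ω, (∑' k : Fin d → ℤ, if k = 0 then 0 else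
        (ENNReal.ofReal ((2 * π * znorm k) ^ 2))⁻¹ * (‖a ω t k‖₊ : ℝ≥0∞) ^ 2) ∂ℙ := by
      rw [← lintegral_const_mul' _ _ ENNReal.ofReal_ne_top]
      refine lintegral_mono fun ω => ?_
      calc (∑' k : Fin d → ℤ, if 0 < znorm k ∧ znorm k ≤ R then (‖a ω t k‖₊ : ℝ≥0∞) ^ 2 else 0)
          ≤ ∑' k : Fin d → ℤ, ENNReal.ofReal A * (if k = 0 then 0 else
              (ENNReal.ofReal ((2 * π * znorm k) ^ 2))⁻¹ * (‖a ω t k‖₊ : ℝ≥0∞) ^ 2) :=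
            ENNReal.tsum_le_tsum fun k => hterm k _
        _ = _ := ENNReal.tsum_mul_left
    calc g t ≤ _ := step1
      _ ≤ ENNReal.ofReal A * ENNReal.ofReal (K * Real.exp (-γ * t)) :=
          mul_le_mul_right (hmix t ht) _
      _ = ENNReal.ofReal (A * K * Real.exp (-γ * t)) := by
          rw [← ENNReal.ofReal_mul hA0]; ring_nf
  -- split the time integral
  have hsplit : Ici (0 : ℝ) = Ico 0 T ∪ Ici T := (Ico_union_Ici_eq_Ici hT0).symm
  have hdisj : Disjoint (Ico (0:ℝ) T) (Ici T) :=
    (Set.disjoint_left.mpr fun x hx hx' => absurd hx.2 (not_lt.mpr hx'))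
  rw [show (∫⁻ t in Set.Ici (0 : ℝ), ∫⁻ ω, (∑' k : Fin d → ℤ,
      if 0 < znorm k ∧ znorm k ≤ R then (‖a ω t k‖₊ : ℝ≥0∞) ^ 2 else 0) ∂ℙ)
      = ∫⁻ t in Ici (0:ℝ), g t from rfl, hsplit,
    lintegral_union measurableSet_Ici hdisj]
  have hbound1 : ∫⁻ t in Ico (0:ℝ) T, g t ≤ ENNReal.ofReal T := by
    calc ∫⁻ t in Ico (0:ℝ) T, g t ≤ ∫⁻ _ in Ico (0:ℝ) T, 1 :=
          setLIntegral_mono measurable_const fun t ht => hg1 t ht.1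
      _ = ENNReal.ofReal T := by simp [Real.volume_Ico]
  have hbound2 : ∫⁻ t in Ici T, g t ≤ ENNReal.ofReal (A * K * Real.exp (-γ * T) / γ) := by
    calc ∫⁻ t in Ici T, g t
        ≤ ∫⁻ t in Ici T, ENNReal.ofReal (A * K * Real.exp (-γ * t)) := by
          refine setLIntegral_mono ?_ fun t ht => hg2 t (le_trans hT0 ht)
          exact ENNReal.measurable_ofReal.comp
            (measurable_const.mul ((measurable_id.const_mul (-γ)).exp))
      _ = ENNReal.ofReal (A * K * Real.exp (-γ * T) / γ) :=
          lintegral_exp_Ici' hγ T (A * K) (by positivity)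
  refine le_trans (add_le_add hbound1 hbound2) ?_
  rw [← ENNReal.ofReal_add hT0 (by positivity)]
  apply ENNReal.ofReal_le_ofReal
  -- real arithmetic
  have hexp : Real.exp (-γ * T) = (R ^ 2)⁻¹ := by
    have h1 : -γ * T = -(2 * Real.log R) := by
      rw [hT]; field_simp
    rw [h1, Real.exp_neg]
    congr 1
    rw [show (2:ℝ) * Real.log R = Real.log (R ^ 2) by rw [Real.log_pow]; push_cast; ring]
    exact Real.exp_log (by positivity)
  rw [hexp]
  have hval : A * K * (R ^ 2)⁻¹ / γ = 4 * π ^ 2 * K / γ := by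
    rw [hA]; field_simp; ring
  rw [hval, hT]
  have hd2 : 0 ≤ 4 * π ^ 2 * K / (γ * Real.log 2) :=
    le_of_lt (div_pos (by positivity) (mul_pos hγ hlog2))
  have h2 : 4 * π ^ 2 * K / (γ * Real.log 2) * Real.log 2
      ≤ 4 * π ^ 2 * K / (γ * Real.log 2) * Real.log R :=
    mul_le_mul_of_nonneg_left hlogR hd2
  have h3 : 4 * π ^ 2 * K / (γ * Real.log 2) * Real.log 2 = 4 * π ^ 2 * K / γ := by
    field_simp
  nlinarith [h2, h3]
end
end

section
/- There is an absolute constant C such that the following holds. Let m be a Borel measure on [1,∞) and K ≥ 1 with m([1,a]) ≤ K log a for all a ≥ 2. Then for every R ≥ 2, every h ∈ (0, R], and every α > 0: μ_{1,R}( { r ∈ [1,∞) : m([r, r+h]) ≥ α h / r } ) ≤ C K α^{−1}. -/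
open MeasureTheory ENNReal Real Set
open scoped Classical

noncomputable section

/-- for a measure with cumulative logarithmic bound, the set of radii whose
annulus `[r,r+h]` is overcharged has small logarithmic density. -/
theorem overcharged_annuli_sparse :
    ∃ C : ℝ, 0 < C ∧
      ∀ (m : Measure ℝ) (K : ℝ), 1 ≤ K →
      m (Set.Iio 1) = 0 →
      (∀ a : ℝ, 2 ≤ a → m (Set.Icc 1 a) ≤ ENNReal.ofReal (K * Real.log a)) →
      ∀ R h α : ℝ, 2 ≤ R → 0 < h → h ≤ R → 0 < α →
        logDensity 1 R {r : ℝ | 1 ≤ r ∧ ENNReal.ofReal (α * h / r) ≤ m (Set.Icc r (r + h))}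
          ≤ ENNReal.ofReal (C * K / α) := by
  refine ⟨2, by norm_num, ?_⟩
  intro m K hK hm0 hmlog R h α hR hh hhR hα
  set E := {r : ℝ | 1 ≤ r ∧ ENNReal.ofReal (α * h / r) ≤ m (Set.Icc r (r + h))} with hE
  set m' := m.restrict (Set.Icc 1 (R + h)) with hm'def
  have hRh2 : (2:ℝ) ≤ R + h := le_trans hR (by linarith)
  have hm'univ : m' Set.univ ≤ ENNReal.ofReal (K * Real.log (R + h)) := by
    rw [Measure.restrict_apply_univ]; exact hmlog _ hRh2
  haveI : IsFiniteMeasure m' := ⟨lt_of_le_of_lt hm'univ ENNReal.ofReal_lt_top⟩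
  -- m' agrees with m on the annuli of interest
  have hagree : ∀ r : ℝ, r ∈ Set.Icc (1:ℝ) R → m' (Set.Icc r (r + h)) = m (Set.Icc r (r + h)) := by
    intro r hr
    rw [hm'def, Measure.restrict_apply measurableSet_Icc,
      Set.inter_eq_self_of_subset_left (Set.Icc_subset_Icc hr.1 (by linarith [hr.2]))]
  -- the measurable majorant g
  set g : ℝ → ℝ≥0∞ := fun r => m' (Set.Iic (r + h)) - m' (Set.Iio r) with hg
  have hgeq : ∀ r : ℝ, g r = m' (Set.Icc r (r + h)) := by
    intro r
    have hsub : Set.Iio r ⊆ Set.Iic (r + h) := by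
      intro x hx
      simp only [Set.mem_Iio] at hx
      simp only [Set.mem_Iic]
      linarith
    have hdiff : Set.Iic (r + h) \ Set.Iio r = Set.Icc r (r + h) := by
      ext x; simp [Set.mem_diff, Set.mem_Icc, not_lt, and_comm]
    show m' (Set.Iic (r + h)) - m' (Set.Iio r) = _
    rw [← measure_diff hsub measurableSet_Iio.nullMeasurableSet (measure_ne_top m' _), hdiff]
  have hgmeas : Measurable g := by
    have mono1 : Monotone fun r : ℝ => m' (Set.Iic (r + h)) := fun a b hab =>
      measure_mono (Set.Iic_subset_Iic.2 (by linarith))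
    have mono2 : Monotone fun r : ℝ => m' (Set.Iio r) := fun a b hab =>
      measure_mono (Set.Iio_subset_Iio hab)
    exact mono1.measurable.sub mono2.measurable
  have hαh : (0:ℝ) < α * h := mul_pos hα hh
  have hc_ne_zero : ENNReal.ofReal (α * h) ≠ 0 := ne_of_gt (ENNReal.ofReal_pos.2 hαh)
  have hc_ne_top : (ENNReal.ofReal (α * h))⁻¹ ≠ ⊤ := ENNReal.inv_ne_top.2 hc_ne_zero
  -- Step 1: pointwise bound on the overcharged set
  have step1 : ∫⁻ r in E ∩ Set.Icc 1 R, ENNReal.ofReal r⁻¹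
      ≤ ∫⁻ r in E ∩ Set.Icc 1 R, (ENNReal.ofReal (α * h))⁻¹ * g r := by
    apply setLIntegral_mono (measurable_const.mul hgmeas)
    intro r hr
    obtain ⟨⟨hr1, hrm⟩, hrI⟩ := hr
    have hr0 : (0:ℝ) < r := lt_of_lt_of_le one_pos hr1
    have key : ENNReal.ofReal (α * h / r) ≤ g r := by
      rw [hgeq r, hagree r hrI]; exact hrm
    have : ENNReal.ofReal r⁻¹ = (ENNReal.ofReal (α * h))⁻¹ * ENNReal.ofReal (α * h / r) := by
      rw [div_eq_mul_inv, ENNReal.ofReal_mul (le_of_lt hαh), ← mul_assoc,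
        ENNReal.inv_mul_cancel hc_ne_zero ENNReal.ofReal_ne_top, one_mul]
    rw [this]
    exact mul_le_mul_right key _
  -- Step 2: enlarge the set and pull out the constant
  have step2 : ∫⁻ r in E ∩ Set.Icc 1 R, (ENNReal.ofReal (α * h))⁻¹ * g r
      ≤ (ENNReal.ofReal (α * h))⁻¹ * ∫⁻ r in Set.Icc 1 R, g r := by
    rw [← lintegral_const_mul' _ _ hc_ne_top]
    exact lintegral_mono_set Set.inter_subset_right
  -- Step 3: Fubini bound on the integral of g
  have step3 : ∫⁻ r in Set.Icc (1:ℝ) R, g r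
      ≤ ENNReal.ofReal h * ENNReal.ofReal (K * Real.log (R + h)) := by
    set F : ℝ × ℝ → ℝ≥0∞ := fun p => Set.indicator {p : ℝ × ℝ | p.1 ≤ p.2 ∧ p.2 ≤ p.1 + h} 1 p
      with hF
    have hFmeas : Measurable F := by
      apply measurable_one.indicator
      exact (measurableSet_le measurable_fst measurable_snd).inter
        (measurableSet_le measurable_snd (measurable_fst.add_const h))
    have hg_int : ∀ r : ℝ, g r = ∫⁻ t, F (r, t) ∂m' := by
      intro r
      have hpt : ∀ t : ℝ, F (r, t) = (Set.Icc r (r + h)).indicator 1 t := by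
        intro t; simp [hF, Set.indicator_apply, Set.mem_Icc]
      rw [hgeq r]
      simp_rw [hpt]
      rw [lintegral_indicator_one measurableSet_Icc]
    calc ∫⁻ r in Set.Icc (1:ℝ) R, g r
        = ∫⁻ r in Set.Icc (1:ℝ) R, ∫⁻ t, F (r, t) ∂m' := by simp_rw [hg_int]
      _ = ∫⁻ t, (∫⁻ r in Set.Icc (1:ℝ) R, F (r, t)) ∂m' := by
          exact lintegral_lintegral_swap (μ := volume.restrict (Set.Icc (1:ℝ) R)) (ν := m')
            (f := fun r t => F (r, t)) hFmeas.aemeasurable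
      _ ≤ ∫⁻ _ , ENNReal.ofReal h ∂m' := by
          refine lintegral_mono (μ := m') (f := fun t => ∫⁻ r in Set.Icc (1:ℝ) R, F (r, t))
            (g := fun _ => ENNReal.ofReal h) fun t => ?_
          have hpt : ∀ r : ℝ, F (r, t) = (Set.Icc (t - h) t).indicator 1 r := by
            intro r
            simp only [hF, Set.indicator_apply, Set.mem_setOf_eq, Set.mem_Icc]
            congr 1
            simp only [eq_iff_iff]
            constructor <;> (intro hx; constructor <;> linarith [hx.1, hx.2])
          simp_rw [hpt]
          rw [lintegral_indicator_one measurableSet_Icc]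
          calc (volume.restrict (Set.Icc (1:ℝ) R)) (Set.Icc (t - h) t)
              ≤ volume (Set.Icc (t - h) t) := Measure.restrict_le_self _
            _ = ENNReal.ofReal h := by rw [Real.volume_Icc]; ring_nf
      _ = ENNReal.ofReal h * m' Set.univ := lintegral_const _
      _ ≤ ENNReal.ofReal h * ENNReal.ofReal (K * Real.log (R + h)) :=
          mul_le_mul_right hm'univ _
  -- log bound
  have hL : (0:ℝ) < Real.log R := Real.log_pos (by linarith)
  have hlogbound : K * Real.log (R + h) ≤ 2 * K * Real.log R := by
    have h1 : Real.log (R + h) ≤ Real.log (R * R) :=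
      Real.log_le_log (by linarith) (by nlinarith)
    have h2 : Real.log (R * R) = 2 * Real.log R := by
      rw [Real.log_mul (by linarith) (by linarith)]; ring
    nlinarith [h1, h2, hK]
  -- assemble
  rw [logDensity, div_one]
  have main : ∫⁻ r in E ∩ Set.Icc 1 R, ENNReal.ofReal r⁻¹
      ≤ (ENNReal.ofReal (α * h))⁻¹ * (ENNReal.ofReal h * ENNReal.ofReal (2 * K * Real.log R)) := by
    refine le_trans step1 (le_trans step2 ?_)
    refine mul_le_mul_right (le_trans step3 ?_) _
    exact mul_le_mul_right (ENNReal.ofReal_le_ofReal hlogbound) _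
  calc (ENNReal.ofReal (Real.log R))⁻¹ * ∫⁻ r in E ∩ Set.Icc 1 R, ENNReal.ofReal r⁻¹
      ≤ (ENNReal.ofReal (Real.log R))⁻¹ *
        ((ENNReal.ofReal (α * h))⁻¹ * (ENNReal.ofReal h * ENNReal.ofReal (2 * K * Real.log R))) :=
        mul_le_mul_right main _
    _ = ENNReal.ofReal (2 * K / α) := by
        have hh0 : h ≠ 0 := ne_of_gt hh
        have hα0 : α ≠ 0 := ne_of_gt hα
        have hL0 : Real.log R ≠ 0 := ne_of_gt hL
        have e1 : (ENNReal.ofReal (α * h))⁻¹ * ENNReal.ofReal (h * (2 * K * Real.log R))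
            = ENNReal.ofReal (2 * K * Real.log R / α) := by
          rw [← ENNReal.div_eq_inv_mul, ← ENNReal.ofReal_div_of_pos hαh]
          congr 1
          field_simp
        have e2 : (ENNReal.ofReal (Real.log R))⁻¹ * ENNReal.ofReal (2 * K * Real.log R / α)
            = ENNReal.ofReal (2 * K / α) := by
          rw [← ENNReal.div_eq_inv_mul, ← ENNReal.ofReal_div_of_pos hL]
          congr 1
          field_simp
        rw [← ENNReal.ofReal_mul (le_of_lt hh), e1, e2]
end
end

section
/- Let d ≥ 1, ν > 0, r > 0, A ≥ 1, and let w be a weight. Let (Ω,ℱ,ℙ) be a probability space with expectation 𝔼, and let a : Ω × [0,∞) → (ℤ^d → ℂ) be jointly measurable. Define the asymptotic mass measure m(E) := 𝔼 ∫_0^∞ m_{a_t}(E) dt. Assume: (i) almost surely Σ_{|k|≥r} |a_0(k)|² ≤ 1/4; (ii) almost surely, for every T > 0, the flux inequality Σ_{|k|≥r} |a_T(k)|² − Σ_{|k|≥r} |a_0(k)|² + 8π²ν ∫_0^T Σ_{|k|≥r} |k|² |a_t(k)|² dt ≤ 4πr A ∫_0^T (w^{−1} * m_{a_t})(r) dt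 holds; (iii) the dissipation-scale condition 8π²ν ∫_0^∞ 𝔼 Σ_{|k|≥r} |k|² |a_t(k)|² dt ≥ 1/2; and (iv) 𝔼 Σ_k |a_T(k)|² → 0 as T → ∞. Then (w^{−1} * m)(r) ≥ 1 / (16 π A r). -/
open MeasureTheory ENNReal Real Set
open scoped Classical

noncomputable section

/-!
Dropping the nonnegative mass `m_{a_T}([r,∞))` from the flux inequality and letting `T → ∞`
bounds the total dissipation above `r` pathwise by the initial mass (at most `1/4`) plus
`4πrA ∫₀^∞ (w⁻¹ * m_{a_t})(r) dt`. Taking expectations and exchanging them with the time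
integral (Tonelli), the dissipation-scale condition gives `1/2 ≤ 1/4 + 4πrA (w⁻¹ * m)(r)`.
-/

theorem mul_setLIntegral_Ioi_le_of_forall_Ioc_le {μ : Measure ℝ} {f : ℝ → ℝ≥0∞} {a : ℝ}
    {C b : ℝ≥0∞} (h : ∀ T > a, C * ∫⁻ t in Ioc a T, f t ∂μ ≤ b) :
    C * ∫⁻ t in Ioi a, f t ∂μ ≤ b := by
  have hunion : ⋃ n : ℕ, Ioc a (a + n) = Ioi a :=
    iUnion_Ioc_eq_Ioi_self_iff.2 fun x hx => (exists_nat_gt (x - a)).imp fun _ hn => by linarith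
  have hmono : Monotone fun n : ℕ => Ioc a (a + n) := fun m n hmn =>
    Ioc_subset_Ioc_right (by gcongr)
  rw [← hunion, setLIntegral_iUnion_of_directed _ hmono.directed_le, ENNReal.mul_iSup]
  refine iSup_le fun n => ?_
  rcases n.eq_zero_or_pos with rfl | hn
  · simp
  · exact h _ (by simpa)

theorem mul_setLIntegral_Ici_le_of_flux {m S G : ℝ → ℝ≥0∞} {C F : ℝ≥0∞}
    (hflux : ∀ T > (0 : ℝ),
      m T + C * ∫⁻ t in Ioc 0 T, S t ≤ m 0 + F * ∫⁻ t in Ioc 0 T, G t) :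
    C * ∫⁻ t in Ici 0, S t ≤ m 0 + F * ∫⁻ t in Ici 0, G t := by
  rw [← setLIntegral_congr Ioi_ae_eq_Ici]
  refine mul_setLIntegral_Ioi_le_of_forall_Ioc_le fun T hT => ?_
  calc C * ∫⁻ t in Ioc 0 T, S t
      ≤ m T + C * ∫⁻ t in Ioc 0 T, S t := le_add_self
    _ ≤ m 0 + F * ∫⁻ t in Ioc 0 T, G t := hflux T hT
    _ ≤ m 0 + F * ∫⁻ t in Ici 0, G t := by
      gcongr
      exact Ioc_subset_Ioi_self.trans Ioi_subset_Ici_self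

theorem convolved_mass_lower_bound_general {d : ℕ} (ν r A : ℝ)
    (hr : 0 < r) (hA : 1 ≤ A)
    (w : ℝ → ℝ≥0∞)
    {Ω : Type*} [MeasurableSpace Ω] (ℙ : Measure Ω) [IsProbabilityMeasure ℙ]
    (a : Ω → ℝ → (Fin d → ℤ) → ℂ)
    (hmeas : ∀ k : Fin d → ℤ, Measurable fun p : Ω × ℝ => a p.1 p.2 k)
    (h0 : ∀ᵐ ω ∂ℙ, massOn (a ω 0) (Set.Ici r) ≤ ENNReal.ofReal (1 / 4))
    (hflux : ∀ᵐ ω ∂ℙ, ∀ T > (0 : ℝ),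
      massOn (a ω T) (Set.Ici r)
        + ENNReal.ofReal (8 * π ^ 2 * ν) *
          (∫⁻ t in Set.Ioc (0 : ℝ) T, ∑' k : Fin d → ℤ, if r ≤ znorm k then
            ENNReal.ofReal (znorm k ^ 2) * (‖a ω t k‖₊ : ℝ≥0∞) ^ 2 else 0)
        ≤ massOn (a ω 0) (Set.Ici r)
          + ENNReal.ofReal (4 * π * r * A) *
            ∫⁻ t in Set.Ioc (0 : ℝ) T, convMass w (a ω t) r)
    (hdiss : ENNReal.ofReal (1 / 2) ≤
      ENNReal.ofReal (8 * π ^ 2 * ν) *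
        ∫⁻ t in Set.Ici (0 : ℝ), ∫⁻ ω, (∑' k : Fin d → ℤ, if r ≤ znorm k then
          ENNReal.ofReal (znorm k ^ 2) * (‖a ω t k‖₊ : ℝ≥0∞) ^ 2 else 0) ∂ℙ) :
    ENNReal.ofReal (1 / (16 * π * A * r)) ≤
      ∫⁻ ω, (∫⁻ t in Set.Ici (0 : ℝ), convMass w (a ω t) r) ∂ℙ := by
  set S : Ω → ℝ → ℝ≥0∞ := fun ω t => ∑' k : Fin d → ℤ, if r ≤ znorm k then
    ENNReal.ofReal (znorm k ^ 2) * (‖a ω t k‖₊ : ℝ≥0∞) ^ 2 else 0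
  set C := ENNReal.ofReal (8 * π ^ 2 * ν)
  set F := ENNReal.ofReal (4 * π * r * A)
  set X := ∫⁻ ω, (∫⁻ t in Ici (0 : ℝ), convMass w (a ω t) r) ∂ℙ
  have hS : Measurable (Function.uncurry S) :=
    Measurable.tsum fun k => by split_ifs <;> fun_prop
  have hpath : ∀ᵐ ω ∂ℙ, C * ∫⁻ t in Ici 0, S ω t
      ≤ ENNReal.ofReal (1 / 4) + F * ∫⁻ t in Ici 0, convMass w (a ω t) r := by
    filter_upwards [h0, hflux] with ω h0ω hfluxω
    exact (mul_setLIntegral_Ici_le_of_flux hfluxω).trans (by gcongr)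
  have hbudget : ENNReal.ofReal (1 / 2) ≤ ENNReal.ofReal (1 / 4) + F * X :=
    calc ENNReal.ofReal (1 / 2)
        ≤ C * ∫⁻ t in Ici 0, (∫⁻ ω, S ω t ∂ℙ) := hdiss
      _ = ∫⁻ ω, C * (∫⁻ t in Ici 0, S ω t) ∂ℙ := by
        rw [lintegral_const_mul' _ _ ofReal_ne_top, lintegral_lintegral_swap hS.aemeasurable]
      _ ≤ ∫⁻ ω, (ENNReal.ofReal (1 / 4) + F * ∫⁻ t in Ici 0, convMass w (a ω t) r) ∂ℙ
        := lintegral_mono_ae hpath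
      _ = ENNReal.ofReal (1 / 4) + F * X := by
        rw [lintegral_add_left measurable_const, lintegral_const_mul' _ _ ofReal_ne_top,
          lintegral_const, measure_univ, mul_one]
  have hquarter : ENNReal.ofReal (1 / 4) ≤ F * X := by
    refine ENNReal.le_of_add_le_add_left ofReal_ne_top (le_trans ?_ hbudget)
    rw [← ofReal_add] <;> norm_num
  rw [show 1 / (16 * π * A * r) = 1 / 4 / (4 * π * r * A) by field_simp; ring,
    ofReal_div_of_pos (by positivity)]
  exact div_le_of_le_mul' hquarter

/-- under an a.s. flux inequality with constant flux magnitude `A`, the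
dissipation-scale condition, and decay of the total mass, the convolved asymptotic mass
measure satisfies `(w⁻¹ * m)(r) ≥ 1/(16πAr)`. -/
theorem convolved_mass_lower_bound {d : ℕ} (hd : 1 ≤ d) (ν r A : ℝ)
    (hν : 0 < ν) (hr : 0 < r) (hA : 1 ≤ A)
    (w : ℝ → ℝ≥0∞) (hw : IsWeight w)
    {Ω : Type*} [MeasurableSpace Ω] (ℙ : Measure Ω) [IsProbabilityMeasure ℙ]
    (a : Ω → ℝ → (Fin d → ℤ) → ℂ)
    (hmeas : ∀ k : Fin d → ℤ, Measurable fun p : Ω × ℝ => a p.1 p.2 k)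
    (h0 : ∀ᵐ ω ∂ℙ, massOn (a ω 0) (Set.Ici r) ≤ ENNReal.ofReal (1 / 4))
    (hflux : ∀ᵐ ω ∂ℙ, ∀ T > (0 : ℝ),
      massOn (a ω T) (Set.Ici r)
        + ENNReal.ofReal (8 * π ^ 2 * ν) *
          (∫⁻ t in Set.Ioc (0 : ℝ) T, ∑' k : Fin d → ℤ, if r ≤ znorm k then
            ENNReal.ofReal (znorm k ^ 2) * (‖a ω t k‖₊ : ℝ≥0∞) ^ 2 else 0)
        ≤ massOn (a ω 0) (Set.Ici r)
          + ENNReal.ofReal (4 * π * r * A) *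
            ∫⁻ t in Set.Ioc (0 : ℝ) T, convMass w (a ω t) r)
    (hdiss : ENNReal.ofReal (1 / 2) ≤
      ENNReal.ofReal (8 * π ^ 2 * ν) *
        ∫⁻ t in Set.Ici (0 : ℝ), ∫⁻ ω, (∑' k : Fin d → ℤ, if r ≤ znorm k then
          ENNReal.ofReal (znorm k ^ 2) * (‖a ω t k‖₊ : ℝ≥0∞) ^ 2 else 0) ∂ℙ)
    (hdecay : Filter.Tendsto
      (fun T => ∫⁻ ω, (∑' k : Fin d → ℤ, (‖a ω T k‖₊ : ℝ≥0∞) ^ 2) ∂ℙ)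
      Filter.atTop (nhds 0)) :
    ENNReal.ofReal (1 / (16 * π * A * r)) ≤
      ∫⁻ ω, (∫⁻ t in Set.Ici (0 : ℝ), convMass w (a ω t) r) ∂ℙ :=
  convolved_mass_lower_bound_general ν r A hr hA w ℙ a hmeas h0 hflux hdiss
end
end

section
/- There is an absolute constant C such that the following holds. Let m be a Borel measure on [1,∞) and K ≥ 1 with m([1,a]) ≤ K log a for all a ≥ 2. Then for every q ≥ 2, every h with 1 ≤ h ≤ R, and every R ≥ 2: ∫_1^R ∫_{r+h/4}^{r+3h/4} ( ∫_{[1,∞) ∖ [r, r+h]} ( 2 (1 + |s−z|)^q )^{−1} m(dz) ) ds dr ≤ C^q K h^{3−q} log R. -/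
open MeasureTheory ENNReal Real Set
open scoped Classical

noncomputable section

/-! For `s` in the middle half `[r + h/4, r + 3h/4]` and `z` off `[r, r + h]` we have
`|s - z| ≥ h / 4`, so `w_q(|s - z|)⁻¹ ≤ (4 / h)^(q - 2) w_2(|s - z|)⁻¹`, and `z` may then range over
all of `[1, ∞)`. Averaging the band over `r ∈ [1, R]` costs a factor `h / 2` and leaves
`s ∈ [1, 2R]`. After Tonelli each `z` contributes `∫ w_2(|s - z|)⁻¹ ds`, which is at most `2` for
`z < 4R` and at most `1 / z` beyond. The near part is `≤ 2 K log (4R)` by the mass bound; the far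
part `∫_{z ≥ 4R} z⁻¹ dm` is `O(K)`, by writing `z⁻¹ = ∫_z^∞ t⁻² dt` and integrating
`m([1, t]) ≤ K log t` against `t⁻²`. -/

lemma sigmaFinite_of_measure_Icc_le {m : Measure ℝ} {K : ℝ} (h0 : m (Iio 1) = 0)
    (hm : ∀ a : ℝ, 2 ≤ a → m (Icc 1 a) ≤ ENNReal.ofReal (K * Real.log a)) : SigmaFinite m := by
  have hfin (n : ℕ) : m (Iic ((n : ℝ) + 2)) < ⊤ := calc
    m (Iic ((n : ℝ) + 2)) ≤ m (Iio 1) + m (Icc 1 ((n : ℝ) + 2)) := by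
      rw [← Iio_union_Icc_eq_Iic (a := 1) (by linarith [n.cast_nonneg (α := ℝ)])]
      exact measure_union_le _ _
    _ < ⊤ := by
      rw [h0, zero_add]
      exact (hm _ (by linarith [n.cast_nonneg (α := ℝ)])).trans_lt ofReal_lt_top
  refine ⟨⟨⟨fun n => Iic ((n : ℝ) + 2), fun _ => trivial, hfin, ?_⟩⟩⟩
  refine eq_univ_of_forall fun x => mem_iUnion.2 ?_
  obtain ⟨n, hn⟩ := exists_nat_ge x
  exact ⟨n, show x ≤ (n : ℝ) + 2 by linarith⟩

lemma lintegral_Icc_lintegral_Icc_add_le {J : ℝ → ℝ≥0∞} (hJ : Measurable J) (a b α β : ℝ) :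
    ∫⁻ r in Icc a b, ∫⁻ s in Icc (r + α) (r + β), J s
      ≤ ENNReal.ofReal (β - α) * ∫⁻ s in Icc (a + α) (b + β), J s := by
  have shift (c x y : ℝ) : ∫⁻ s in Icc (c + x) (c + y), J s = ∫⁻ u in Icc x y, J (c + u) := by
    rw [(measurePreserving_add_left volume c).setLIntegral_comp_emb
      (measurableEmbedding_addLeft c), image_const_add_Icc]
  calc ∫⁻ r in Icc a b, ∫⁻ s in Icc (r + α) (r + β), J s
      = ∫⁻ u in Icc α β, ∫⁻ r in Icc a b, J (r + u) := by
        simp_rw [shift]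
        exact lintegral_lintegral_swap (hJ.comp measurable_add).aemeasurable
    _ ≤ ∫⁻ _ in Icc α β, ∫⁻ s in Icc (a + α) (b + β), J s := by
        refine setLIntegral_mono' measurableSet_Icc fun u hu => ?_
        simp_rw [add_comm _ u, ← shift]
        exact lintegral_mono_set (Icc_subset_Icc (by linarith [hu.1]) (by linarith [hu.2]))
    _ = _ := by rw [setLIntegral_const, Real.volume_Icc, mul_comm]

lemma setLIntegral_lintegral_Ioi_eq (m : Measure ℝ) [SFinite m] {f : ℝ → ℝ≥0∞}
    (hf : Measurable f) (S : Set ℝ) :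
    ∫⁻ z in S, (∫⁻ t in Ioi z, f t) ∂m = ∫⁻ t, f t * m (Iio t ∩ S) := by
  have hind (z t : ℝ) : (Ioi z).indicator f t = (Iio t).indicator (fun _ => f t) z := by
    by_cases h : z < t <;> simp [indicator, h]
  have hmeas : Measurable (Function.uncurry fun z t : ℝ => (Iio t).indicator (fun _ => f t) z) :=
    (hf.comp measurable_snd).indicator (measurableSet_lt measurable_fst measurable_snd)
  simp_rw [← lintegral_indicator measurableSet_Ioi, hind]
  rw [lintegral_lintegral_swap hmeas.aemeasurable]
  simp_rw [lintegral_indicator measurableSet_Iio, setLIntegral_const,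
    Measure.restrict_apply measurableSet_Iio]

lemma lintegral_Ioi_rpow_of_lt {a c : ℝ} (ha : a < -1) (hc : 0 < c) :
    ∫⁻ t in Ioi c, ENNReal.ofReal (t ^ a) = ENNReal.ofReal (-c ^ (a + 1) / (a + 1)) := by
  rw [← ofReal_integral_eq_lintegral_ofReal (integrableOn_Ioi_rpow_of_lt ha hc)
    ((ae_restrict_iff' measurableSet_Ioi).2 (Filter.Eventually.of_forall fun t ht =>
      rpow_nonneg (hc.trans ht).le _)), integral_Ioi_rpow_of_lt ha hc]

lemma rpow_neg_two_mul_log_le {t : ℝ} (ht : 0 < t) :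
    t ^ (-2 : ℝ) * Real.log t ≤ 2 * t ^ (-3 / 2 : ℝ) := by
  have hlog : Real.log t ≤ 2 * t ^ (1 / 2 : ℝ) := by
    have := log_le_rpow_div ht.le (show (0 : ℝ) < 1 / 2 by norm_num); linarith
  calc t ^ (-2 : ℝ) * Real.log t ≤ t ^ (-2 : ℝ) * (2 * t ^ (1 / 2 : ℝ)) := by gcongr
    _ = 2 * t ^ (-3 / 2 : ℝ) := by rw [mul_left_comm, ← rpow_add ht]; norm_num

lemma lintegral_Ioi_rpow_neg_three_halves_le_one {A : ℝ} (hA : 4 ≤ A) :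
    ∫⁻ t in Ioi A, ENNReal.ofReal (t ^ (-3 / 2 : ℝ)) ≤ 1 := by
  have hA0 : 0 < A := by linarith
  have hsqrt : 2 ≤ A ^ (1 / 2 : ℝ) := by
    rw [← sqrt_eq_rpow]; exact le_sqrt_of_sq_le (by linarith)
  rw [lintegral_Ioi_rpow_of_lt (by norm_num) hA0, ofReal_le_one,
    show (-3 / 2 + 1 : ℝ) = -(1 / 2) by norm_num, rpow_neg hA0.le]
  have := inv_anti₀ (by norm_num : (0 : ℝ) < 2) hsqrt
  linarith

lemma setLIntegral_Ici_inv_le (m : Measure ℝ) [SFinite m] {K A : ℝ} (hK : 0 ≤ K) (hA : 4 ≤ A)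
    (hm : ∀ a : ℝ, 2 ≤ a → m (Icc 1 a) ≤ ENNReal.ofReal (K * Real.log a)) :
    ∫⁻ z in Ici A, ENNReal.ofReal z⁻¹ ∂m ≤ ENNReal.ofReal (2 * K) := by
  have hA0 : 0 < A := by linarith
  have hmass : ∀ t ∈ Ioi A, m (Iio t ∩ Ici A) ≤ ENNReal.ofReal (K * Real.log t) := fun t ht =>
    (measure_mono (show Iio t ∩ Ici A ⊆ Icc 1 t from
      fun x hx => ⟨by linarith [mem_Ici.mp hx.2], hx.1.le⟩)).trans
      (hm t (by linarith [mem_Ioi.mp ht]))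
  calc ∫⁻ z in Ici A, ENNReal.ofReal z⁻¹ ∂m
      = ∫⁻ z in Ici A, (∫⁻ t in Ioi z, ENNReal.ofReal (t ^ (-2 : ℝ))) ∂m := by
        refine setLIntegral_congr_fun measurableSet_Ici fun z hz => ?_
        rw [lintegral_Ioi_rpow_of_lt (by norm_num) (hA0.trans_le hz)]
        norm_num [Real.rpow_neg_one]
    _ = ∫⁻ t, ENNReal.ofReal (t ^ (-2 : ℝ)) * m (Iio t ∩ Ici A) :=
        setLIntegral_lintegral_Ioi_eq m (by fun_prop) _
    _ = ∫⁻ t in Ioi A, ENNReal.ofReal (t ^ (-2 : ℝ)) * m (Iio t ∩ Ici A) := by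
        refine (setLIntegral_eq_of_support_subset fun t ht => ?_).symm
        by_contra htA
        apply ht
        rw [inter_comm, Ici_inter_Iio, Ico_eq_empty (by simpa using htA), measure_empty, mul_zero]
    _ ≤ ∫⁻ t in Ioi A, ENNReal.ofReal (2 * K) * ENNReal.ofReal (t ^ (-3 / 2 : ℝ)) := by
        refine setLIntegral_mono' measurableSet_Ioi fun t ht => ?_
        have ht0 : 0 < t := hA0.trans ht
        refine (mul_le_mul_right (hmass t ht) _).trans ?_
        rw [← ofReal_mul (by positivity), ← ofReal_mul (by positivity)]
        refine ofReal_le_ofReal ?_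
        nlinarith [rpow_neg_two_mul_log_le ht0]
    _ ≤ ENNReal.ofReal (2 * K) := by
        rw [lintegral_const_mul _ (by fun_prop)]
        exact mul_le_of_le_one_right' (lintegral_Ioi_rpow_neg_three_halves_le_one hA)

lemma four_div_rpow_sub_two_mul (q : ℝ) {h : ℝ} (hh : 0 < h) :
    (4 / h) ^ (q - 2) * h = 4 ^ q * h ^ (3 - q) / 16 := by
  rw [div_rpow (by norm_num) hh.le, rpow_sub (by norm_num : (0 : ℝ) < 4),
    show (3 : ℝ) - q = -(q - 2) + 1 by ring, rpow_add hh, rpow_neg hh.le, Real.rpow_one]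
  norm_num
  ring

def invWeight (q t : ℝ) : ℝ≥0∞ := (ENNReal.ofReal (2 * (1 + |t|) ^ q))⁻¹

lemma measurable_invWeight (q : ℝ) : Measurable (invWeight q) := by
  unfold invWeight; fun_prop

lemma invWeight_le_of_le_abs {q ρ t : ℝ} (hq : 2 ≤ q) (hρ : 0 < ρ) (ht : ρ ≤ |t|) :
    invWeight q t ≤ ENNReal.ofReal (ρ⁻¹ ^ (q - 2)) * invWeight 2 t := by
  have hd : 0 < 1 + |t| := by positivity
  have hsplit : (1 + |t|) ^ q = (1 + |t|) ^ (q - 2) * (1 + |t|) ^ (2 : ℝ) := by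
    rw [← rpow_add hd]; ring_nf
  have hgrow : ρ ^ (q - 2) ≤ (1 + |t|) ^ (q - 2) :=
    rpow_le_rpow hρ.le (by linarith) (by linarith)
  unfold invWeight
  rw [← ofReal_inv_of_pos (by positivity), ← ofReal_inv_of_pos (by positivity),
    ← ofReal_mul (by positivity), inv_rpow hρ.le, ← mul_inv, hsplit]
  refine ofReal_le_ofReal (inv_anti₀ (by positivity) ?_)
  calc ρ ^ (q - 2) * (2 * (1 + |t|) ^ (2 : ℝ))
      = 2 * (ρ ^ (q - 2) * (1 + |t|) ^ (2 : ℝ)) := by ring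
    _ ≤ 2 * ((1 + |t|) ^ (q - 2) * (1 + |t|) ^ (2 : ℝ)) := by gcongr

lemma setLIntegral_diff_Icc_invWeight_le (m : Measure ℝ) {q h r s : ℝ} (hq : 2 ≤ q)
    (hh : 0 < h) (hs : s ∈ Icc (r + h / 4) (r + 3 * h / 4)) {S : Set ℝ} (hS : MeasurableSet S) :
    ∫⁻ z in S \ Icc r (r + h), invWeight q (s - z) ∂m
      ≤ ENNReal.ofReal ((4 / h) ^ (q - 2)) * ∫⁻ z in S, invWeight 2 (s - z) ∂m := by
  rw [← lintegral_const_mul' _ _ ofReal_ne_top]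
  refine (setLIntegral_mono' (hS.diff measurableSet_Icc) fun z hz => ?_).trans
    (lintegral_mono_set sdiff_subset)
  have hfar : h / 4 ≤ |s - z| := by
    rcases not_and_or.mp hz.2 with hzr | hzr <;> rw [not_le] at hzr
    · rw [abs_of_pos (by linarith [hs.1])]; linarith [hs.1]
    · rw [abs_of_neg (by linarith [hs.2])]; linarith [hs.2]
  simpa only [inv_div] using invWeight_le_of_le_abs hq (by positivity) hfar

lemma invWeight_two_le (t : ℝ) : invWeight 2 t ≤ ENNReal.ofReal (2⁻¹ * (1 + t ^ 2)⁻¹) := by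
  rw [invWeight, Real.rpow_two, ← ofReal_inv_of_pos (by positivity), ← mul_inv]
  exact ofReal_le_ofReal (inv_anti₀ (by positivity) (by nlinarith [sq_abs t, abs_nonneg t]))

lemma lintegral_invWeight_two_le (z : ℝ) : ∫⁻ s, invWeight 2 (s - z) ≤ 2 := calc
  _ ≤ ∫⁻ s, ENNReal.ofReal (2⁻¹ * (1 + (s - z) ^ 2)⁻¹) :=
      lintegral_mono fun s => invWeight_two_le _
  _ = ∫⁻ u, ENNReal.ofReal (2⁻¹ * (1 + u ^ 2)⁻¹) :=
      lintegral_sub_right_eq_self (fun u => ENNReal.ofReal (2⁻¹ * (1 + u ^ 2)⁻¹)) z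
  _ = ENNReal.ofReal (π / 2) := by
      rw [← ofReal_integral_eq_lintegral_ofReal (integrable_inv_one_add_sq.const_mul _)
        (Filter.Eventually.of_forall fun u => by positivity), integral_const_mul,
        integral_univ_inv_one_add_sq]
      ring_nf
  _ ≤ 2 := by
      rw [← ofReal_ofNat 2]
      exact ofReal_le_ofReal (by linarith [pi_lt_four])

lemma setLIntegral_Icc_invWeight_two_le_inv {B z : ℝ} (hz : 0 < z) (hBz : 2 * B ≤ z) :
    ∫⁻ s in Icc 1 B, invWeight 2 (s - z) ≤ ENNReal.ofReal z⁻¹ := by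
  have hpt : ∀ s ∈ Icc 1 B, invWeight 2 (s - z) ≤ ENNReal.ofReal (2 / z ^ 2) := by
    intro s hs
    refine (invWeight_two_le _).trans (ofReal_le_ofReal ?_)
    have hsz : z ^ 2 / 4 ≤ (s - z) ^ 2 := by nlinarith [hs.2]
    calc 2⁻¹ * (1 + (s - z) ^ 2)⁻¹ ≤ 2⁻¹ * (z ^ 2 / 4)⁻¹ := by gcongr; linarith
      _ = 2 / z ^ 2 := by field_simp; ring
  calc ∫⁻ s in Icc 1 B, invWeight 2 (s - z)
      ≤ ∫⁻ _ in Icc 1 B, ENNReal.ofReal (2 / z ^ 2) := setLIntegral_mono' measurableSet_Icc hpt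
    _ = ENNReal.ofReal (2 / z ^ 2 * (B - 1)) := by
        rw [setLIntegral_const, Real.volume_Icc, ofReal_mul (by positivity)]
    _ ≤ ENNReal.ofReal z⁻¹ := by
        refine ofReal_le_ofReal ?_
        calc 2 / z ^ 2 * (B - 1) ≤ 2 / z ^ 2 * (z / 2) := by gcongr; linarith
          _ = z⁻¹ := by field_simp

lemma lintegral_Icc_lintegral_invWeight_two_le (m : Measure ℝ) [SFinite m] {K R : ℝ}
    (hK : 0 ≤ K) (hR : 2 ≤ R)
    (hm : ∀ a : ℝ, 2 ≤ a → m (Icc 1 a) ≤ ENNReal.ofReal (K * Real.log a)) :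
    ∫⁻ s in Icc 1 (2 * R), ∫⁻ z in Ici 1, invWeight 2 (s - z) ∂m
      ≤ ENNReal.ofReal (9 * K * Real.log R) := by
  have hlog2 : 2 / 3 < Real.log 2 := by linarith [log_two_gt_d9]
  have hlogR : Real.log 2 ≤ Real.log R := log_le_log (by norm_num) hR
  have hlog4R : Real.log (4 * R) ≤ 3 * Real.log R := by
    rw [log_mul (by norm_num) (by linarith), show (4 : ℝ) = 2 ^ 2 by norm_num, Real.log_pow]
    push_cast; linarith
  have near : ∫⁻ z in Ico 1 (4 * R), (∫⁻ s in Icc 1 (2 * R), invWeight 2 (s - z)) ∂m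
      ≤ ENNReal.ofReal (2 * (K * Real.log (4 * R))) := calc
    _ ≤ ∫⁻ _ in Ico 1 (4 * R), 2 ∂m :=
        lintegral_mono fun z => (setLIntegral_le_lintegral _ _).trans (lintegral_invWeight_two_le z)
    _ = 2 * m (Ico 1 (4 * R)) := setLIntegral_const _ _
    _ ≤ 2 * ENNReal.ofReal (K * Real.log (4 * R)) :=
        mul_le_mul_right ((measure_mono Ico_subset_Icc_self).trans (hm _ (by linarith))) _
    _ = _ := by rw [ofReal_mul zero_le_two, ofReal_ofNat]
  have far : ∫⁻ z in Ici (4 * R), (∫⁻ s in Icc 1 (2 * R), invWeight 2 (s - z)) ∂m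
      ≤ ENNReal.ofReal (2 * K) := calc
    _ ≤ ∫⁻ z in Ici (4 * R), ENNReal.ofReal z⁻¹ ∂m :=
        setLIntegral_mono' measurableSet_Ici fun z hz => by
          have hz : 4 * R ≤ z := hz
          exact setLIntegral_Icc_invWeight_two_le_inv (by linarith) (by linarith)
    _ ≤ _ := setLIntegral_Ici_inv_le m hK (by linarith) hm
  calc ∫⁻ s in Icc 1 (2 * R), ∫⁻ z in Ici 1, invWeight 2 (s - z) ∂m
      = ∫⁻ z in Ico 1 (4 * R) ∪ Ici (4 * R), (∫⁻ s in Icc 1 (2 * R), invWeight 2 (s - z)) ∂m := by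
        rw [Ico_union_Ici_eq_Ici (by linarith)]
        exact lintegral_lintegral_swap ((measurable_invWeight 2).comp measurable_sub).aemeasurable
    _ ≤ ENNReal.ofReal (2 * (K * Real.log (4 * R))) + ENNReal.ofReal (2 * K) := by
        rw [lintegral_union measurableSet_Ici
          ((Iio_disjoint_Ici le_rfl).mono_left Ico_subset_Iio_self)]
        exact add_le_add near far
    _ ≤ ENNReal.ofReal (9 * K * Real.log R) := by
        have hlog4R_nonneg : 0 ≤ Real.log (4 * R) := Real.log_nonneg (by linarith)
        rw [← ofReal_add (by positivity) (by positivity)]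
        exact ofReal_le_ofReal (by nlinarith)

/-- the averaged off-annulus contribution to the convolution `w_q⁻¹ * m`
is bounded by `C^q K h^{3-q} log R`. -/
theorem off_annulus_contribution_bound :
    ∃ C : ℝ, 0 < C ∧
      ∀ (m : Measure ℝ) (K : ℝ), 1 ≤ K → m (Set.Iio 1) = 0 →
      (∀ a : ℝ, 2 ≤ a → m (Set.Icc 1 a) ≤ ENNReal.ofReal (K * Real.log a)) →
      ∀ q h R : ℝ, 2 ≤ q → 1 ≤ h → h ≤ R → 2 ≤ R →
        (∫⁻ r in Set.Icc (1 : ℝ) R, ∫⁻ s in Set.Icc (r + h / 4) (r + 3 * h / 4),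
            ∫⁻ z in Set.Ici (1 : ℝ) \ Set.Icc r (r + h),
              (ENNReal.ofReal (2 * (1 + |s - z|) ^ q))⁻¹ ∂m)
          ≤ ENNReal.ofReal (C ^ q * K * h ^ (3 - q) * Real.log R) := by
  refine ⟨4, by norm_num, fun m K hK h0 hm q h R hq hh hhR hR => ?_⟩
  have := sigmaFinite_of_measure_Icc_le h0 hm
  have hh0 : 0 < h := by linarith
  set c := ENNReal.ofReal ((4 / h) ^ (q - 2))
  have hc : c ≠ ⊤ := ofReal_ne_top
  set J : ℝ → ℝ≥0∞ := fun s => ∫⁻ z in Ici 1, invWeight 2 (s - z) ∂m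
  have hJ : Measurable J := ((measurable_invWeight 2).comp measurable_sub).lintegral_prod_right'
  have hlogR : 0 ≤ Real.log R := Real.log_nonneg (by linarith)
  calc _ ≤ ∫⁻ r in Icc 1 R, ∫⁻ s in Icc (r + h / 4) (r + 3 * h / 4), c * J s :=
        setLIntegral_mono' measurableSet_Icc fun r _ => setLIntegral_mono' measurableSet_Icc
          fun s hs => setLIntegral_diff_Icc_invWeight_le m hq hh0 hs measurableSet_Ici
    _ = c * ∫⁻ r in Icc 1 R, ∫⁻ s in Icc (r + h / 4) (r + 3 * h / 4), J s := by
        simp only [lintegral_const_mul' _ _ hc]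
    _ ≤ c * (ENNReal.ofReal (h / 2) * ∫⁻ s in Icc 1 (2 * R), J s) := by
        refine mul_le_mul_right ((lintegral_Icc_lintegral_Icc_add_le hJ _ _ _ _).trans ?_) _
        rw [show 3 * h / 4 - h / 4 = h / 2 by ring]
        exact mul_le_mul_right (lintegral_mono_set (Icc_subset_Icc (by linarith) (by linarith))) _
    _ ≤ c * (ENNReal.ofReal (h / 2) * ENNReal.ofReal (9 * K * Real.log R)) :=
        mul_le_mul_right (mul_le_mul_right
          (lintegral_Icc_lintegral_invWeight_two_le m (by linarith) hR hm) _) _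
    _ = ENNReal.ofReal (4 ^ q * h ^ (3 - q) / 16 * (9 / 2 * K * Real.log R)) := by
        rw [← ofReal_mul (by positivity), ← ofReal_mul (by positivity),
          ← four_div_rpow_sub_two_mul q hh0]
        congr 1; ring
    _ ≤ ENNReal.ofReal (4 ^ q * K * h ^ (3 - q) * Real.log R) := by
        refine ofReal_le_ofReal ?_
        have : 0 ≤ 4 ^ q * K * h ^ (3 - q) * Real.log R := by positivity
        linarith
end
end
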